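/- arXiv:2011.10076 — 9 statements merged into one kernel-verified Lean document; each statement's English description precedes it below -/
import Mathlib

section
/- If π⁺ is the proximal update π⁺ ∈ argmin_{π ∈ Π} {−π y⁺ + f*(π) + τ D_{f*}(πᵗ, π)} where πᵗ = f'(ȳᵗ) ∈ ∂f(ȳᵗ), then π⁺ ∈ ∂f(ȳ⁺) with ȳ⁺ = (y⁺ + τ ȳᵗ)/(1 + τ). In other words, the Bregman proximal step in the dual equals a subgradient evaluation of f at the convex combination ȳ⁺. -/
/-!
Expanding the Bregman distance, the proximal objective
`-⟨π, y⁺⟩ + f*(π) + τ D_{f*}(πᵗ, π)` equals `(1 + τ) (f*(π) - ⟨π, ȳ⁺⟩)` plus a constant.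
Hence `π⁺` maximizes `⟨π, ȳ⁺⟩ - f*(π)` over `Π`, which by conjugate duality means `π⁺ ∈ ∂f(ȳ⁺)`.
-/

open Matrix

section BregmanProx

variable {ι : Type*} [Fintype ι]

/-- `g` plays the role of the selected subgradient `φ'(π₀)`. -/
def bregmanDist (φ : (ι → ℝ) → ℝ) (g π₀ π : ι → ℝ) : ℝ :=
  φ π - φ π₀ - g ⬝ᵥ (π - π₀)

theorem dotProduct_convexCombination (τ : ℝ) (hτ : 1 + τ ≠ 0) (π y g : ι → ℝ) :
    π ⬝ᵥ (fun i => (y i + τ * g i) / (1 + τ)) = (π ⬝ᵥ y + τ * (g ⬝ᵥ π)) / (1 + τ) := by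
  have hvec : (fun i => (y i + τ * g i) / (1 + τ)) = (1 + τ)⁻¹ • (y + τ • g) := by
    ext i
    simp only [Pi.smul_apply, Pi.add_apply, smul_eq_mul]
    field_simp
  rw [hvec, dotProduct_smul, dotProduct_add, dotProduct_smul, dotProduct_comm π g, smul_eq_mul,
    smul_eq_mul]
  field_simp

theorem bregmanProx_objective_eq (φ : (ι → ℝ) → ℝ) (τ : ℝ) (hτ : 1 + τ ≠ 0) (g y π₀ π : ι → ℝ) :
    -(π ⬝ᵥ y) + φ π + τ * bregmanDist φ g π₀ π =
      (1 + τ) * (φ π - π ⬝ᵥ (fun i => (y i + τ * g i) / (1 + τ))) +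
        τ * (g ⬝ᵥ π₀ - φ π₀) := by
  rw [dotProduct_convexCombination τ hτ, bregmanDist, dotProduct_sub]
  field_simp
  ring

theorem isMaxOn_of_isMinOn_bregmanProx {φ : (ι → ℝ) → ℝ} {τ : ℝ} (hτ : 0 < 1 + τ)
    {g y π₀ p : ι → ℝ} {s : Set (ι → ℝ)}
    (hmin : IsMinOn (fun π => -(π ⬝ᵥ y) + φ π + τ * bregmanDist φ g π₀ π) s p) :
    IsMaxOn (fun π => π ⬝ᵥ (fun i => (y i + τ * g i) / (1 + τ)) - φ π) s p := by
  refine isMaxOn_iff.mpr fun π hπ => ?_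
  have h := isMinOn_iff.mp hmin π hπ
  rw [bregmanProx_objective_eq φ τ hτ.ne', bregmanProx_objective_eq φ τ hτ.ne'] at h
  have h' := le_of_mul_le_mul_left (le_of_add_le_add_right h) hτ
  linarith

end BregmanProx

theorem stmt_2_general {m : ℕ}
    (f : (Fin m → ℝ) → ℝ) (fstar : (Fin m → ℝ) → ℝ) (Pdom : Set (Fin m → ℝ))
    (τ : ℝ) (hτ : 0 ≤ τ)
    (ybart yplus : Fin m → ℝ) (πt πplus : Fin m → ℝ)
    -- conjugate duality: maximizers of π ↦ π y − f*(π) over Π are exactly the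
    -- subgradients of f at y (valid since f is proper closed convex)
    (hconj : ∀ (y : Fin m → ℝ) (π : Fin m → ℝ), π ∈ Pdom →
      ((∀ π' ∈ Pdom, (∑ i, π' i * y i) - fstar π' ≤ (∑ i, π i * y i) - fstar π) ↔
        ∀ y', f y' ≥ f y + ∑ i, π i * (y' i - y i)))
    -- D_{f*}(πᵗ, ·), the Bregman distance of f* with subgradient selection (f*)'(πᵗ) = ȳᵗ
    (D : (Fin m → ℝ) → ℝ)
    (hD : ∀ π, D π = fstar π - fstar πt - ∑ i, ybart i * (π i - πt i))
    -- π⁺ minimizes the proximal objective over Π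
    (hmem : πplus ∈ Pdom)
    (hmin : ∀ π ∈ Pdom,
      (-(∑ i, πplus i * yplus i) + fstar πplus + τ * D πplus) ≤
        (-(∑ i, π i * yplus i) + fstar π + τ * D π)) :
    ∀ y', f y' ≥ f (fun i => (yplus i + τ * ybart i) / (1 + τ)) +
      ∑ i, πplus i * (y' i - (yplus i + τ * ybart i) / (1 + τ)) := by
  obtain rfl : D = bregmanDist fstar ybart πt := funext hD
  have hmax := isMaxOn_of_isMinOn_bregmanProx (by linarith) (isMinOn_iff.mpr hmin)
  exact (hconj _ πplus hmem).mp fun π' hπ' => hmax hπ'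

/-- If `π⁺` is the Bregman proximal update
`π⁺ ∈ argmin_{π ∈ Π} {−π y⁺ + f*(π) + τ D_{f*}(πᵗ, π)}` where `πᵗ = f'(ȳᵗ) ∈ ∂f(ȳᵗ)`,
then `π⁺ ∈ ∂f(ȳ⁺)` with `ȳ⁺ = (y⁺ + τ ȳᵗ)/(1 + τ)`: the dual Bregman proximal step
equals a subgradient evaluation of `f` at the convex combination `ȳ⁺`. -/
theorem stmt_2 {m : ℕ}
    (f : (Fin m → ℝ) → ℝ) (fstar : (Fin m → ℝ) → ℝ) (Pdom : Set (Fin m → ℝ))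
    (τ : ℝ) (hτ : 0 ≤ τ)
    (ybart yplus : Fin m → ℝ) (πt πplus : Fin m → ℝ)
    (hπtmem : πt ∈ Pdom)
    -- πᵗ = f'(ȳᵗ) ∈ ∂f(ȳᵗ)
    (hπt : ∀ y, f y ≥ f ybart + ∑ i, πt i * (y i - ybart i))
    -- conjugate duality: maximizers of π ↦ π y − f*(π) over Π are exactly the
    -- subgradients of f at y (valid since f is proper closed convex)
    (hconj : ∀ (y : Fin m → ℝ) (π : Fin m → ℝ), π ∈ Pdom →
      ((∀ π' ∈ Pdom, (∑ i, π' i * y i) - fstar π' ≤ (∑ i, π i * y i) - fstar π) ↔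
        ∀ y', f y' ≥ f y + ∑ i, π i * (y' i - y i)))
    -- D_{f*}(πᵗ, ·), the Bregman distance of f* with subgradient selection (f*)'(πᵗ) = ȳᵗ
    (D : (Fin m → ℝ) → ℝ)
    (hD : ∀ π, D π = fstar π - fstar πt - ∑ i, ybart i * (π i - πt i))
    -- π⁺ minimizes the proximal objective over Π
    (hmem : πplus ∈ Pdom)
    (hmin : ∀ π ∈ Pdom,
      (-(∑ i, πplus i * yplus i) + fstar πplus + τ * D πplus) ≤
        (-(∑ i, π i * yplus i) + fstar π + τ * D π)) :
    ∀ y', f y' ≥ f (fun i => (yplus i + τ * ybart i) / (1 + τ)) +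
      ∑ i, πplus i * (y' i - (yplus i + τ * ybart i) / (1 + τ)) :=
  stmt_2_general f fstar Pdom τ hτ ybart yplus πt πplus hconj D hD hmem hmin
end

section
/- Three-point inequality for Bregman proximal steps: if g : Y → ℝ is μ-strongly convex with respect to a Bregman distance V (i.e., g(y) − g(ȳ) − ⟨g'(ȳ), y − ȳ⟩ ≥ μV(ȳ, y) for all y, ȳ ∈ Y) and ŷ ∈ argmin_{y ∈ Y}{⟨π, y⟩ + g(y) + τ V(ȳ, y)}, then for all y ∈ Y: ⟨ŷ − y, π⟩ + g(ŷ) − g(y) ≤ τ V(ȳ, y) − (τ + μ) V(ŷ, y) − τ V(ȳ, ŷ). -/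
/-!
The subgradient `g'(ŷ)` need not be the one occurring in an optimality condition at `ŷ`, so
instead compare `ŷ` with `y_s = ŷ + s (y - ŷ) ∈ Y`: minimality of `ŷ` together with the strong
convexity inequalities at `y_s` gives, after division by `s`, a quantity that is nonnegative and tends as `s → 0⁺` to
`⟨π, y - ŷ⟩ + g(y) - g(ŷ) - μ V(ŷ, y) + τ ⟨ω'(ŷ) - ω'(ȳ), y - ŷ⟩`. The three-point identity
`V(ȳ, y) - V(ȳ, ŷ) - V(ŷ, y) = ⟨ω'(ŷ) - ω'(ȳ), y - ŷ⟩` turns this into the claim.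
-/

open Filter Topology Set InnerProductSpace
open scoped RealInnerProductSpace

theorem ConvexOn.tendsto_deriv_nhdsGT {f f' : ℝ → ℝ} (hf : ConvexOn ℝ univ f)
    (hf' : ∀ x, HasDerivAt f (f' x) x) (a : ℝ) : Tendsto f' (𝓝[>] a) (𝓝 (f' a)) := by
  have hslope : Tendsto (slope f a) (𝓝[>] a) (𝓝 (f' a)) :=
    (hasDerivAt_iff_tendsto_slope.mp (hf' a)).mono_left (nhdsGT_le_nhdsNE a)
  have hreflect : Tendsto (fun s => 2 * s - a) (𝓝[>] a) (𝓝[>] a) := by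
    refine tendsto_nhdsWithin_of_tendsto_nhds_of_eventually_within _ ?_ ?_
    · have hcont : Continuous (fun s : ℝ => 2 * s - a) := by fun_prop
      exact (hcont.tendsto' a a (by ring)).mono_left nhdsWithin_le_nhds
    · filter_upwards [self_mem_nhdsWithin] with s (hs : a < s)
      show a < 2 * s - a
      linarith
  have hupper : Tendsto (fun s => 2 * slope f a (2 * s - a) - slope f a s) (𝓝[>] a)
      (𝓝 (f' a)) := by
    simpa [two_mul] using ((hslope.comp hreflect).const_mul 2).sub hslope
  -- squeeze: `f' a ≤ f' s ≤ slope f s (2 s - a) = 2 slope f a (2 s - a) - slope f a s`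
  refine tendsto_of_tendsto_of_tendsto_of_le_of_le' tendsto_const_nhds hupper ?_ ?_
  all_goals filter_upwards [self_mem_nhdsWithin] with s (hs : a < s)
  · exact (hf.le_slope_of_hasDerivAt trivial trivial hs (hf' a)).trans
      (hf.slope_le_of_hasDerivAt trivial trivial hs (hf' s))
  · calc f' s ≤ slope f s (2 * s - a) :=
          hf.le_slope_of_hasDerivAt trivial trivial (by linarith) (hf' s)
      _ = _ := by
          simp only [slope_def_field]
          field_simp [show s - a ≠ 0 by linarith, show 2 * s - a - a ≠ 0 by linarith,
            show 2 * s - a - s ≠ 0 by linarith]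
          ring

section

variable {E : Type*} [NormedAddCommGroup E] [InnerProductSpace ℝ E]

theorem ConvexOn.comp_add_smul {ω : E → ℝ} (hω : ConvexOn ℝ univ ω) (x v : E) :
    ConvexOn ℝ univ (fun s : ℝ => ω (x + s • v)) := by
  have hline : (fun s : ℝ => ω (x + s • v)) = ω ∘ AffineMap.lineMap x (x + v) := by
    ext s
    simp [AffineMap.lineMap_apply, add_comm]
  rw [hline]
  simpa using hω.comp_affineMap (AffineMap.lineMap x (x + v))

def bregmanDiv (ω : E → ℝ) (ω' : E → E) (x y : E) : ℝ :=
  ω y - ω x - ⟪ω' x, y - x⟫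

theorem bregmanDiv_three_point (ω : E → ℝ) (ω' : E → E) (x y z : E) :
    bregmanDiv ω ω' z y - bregmanDiv ω ω' z x - bregmanDiv ω ω' x y = ⟪ω' x - ω' z, y - x⟫ := by
  simp only [bregmanDiv, inner_sub_left, inner_sub_right]
  ring

theorem apply_add_smul_sub_le_of_subgradient {Y : Set E} (hY : Convex ℝ Y) {g : E → ℝ}
    {g' : E → E} {D : E → E → ℝ} {μ : ℝ} (hμ : 0 ≤ μ) (hD : ∀ x y, 0 ≤ D x y)
    (hg : ∀ y ∈ Y, ∀ z ∈ Y, g y - g z - ⟪g' z, y - z⟫ ≥ μ * D z y)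
    {x y : E} (hx : x ∈ Y) (hy : y ∈ Y) {s : ℝ} (hs0 : 0 ≤ s) (hs1 : s ≤ 1) :
    g (x + s • (y - x)) - g x ≤ s * (g y - g x - μ * D (x + s • (y - x)) y) := by
  set z := x + s • (y - x)
  have hz : z ∈ Y := hY.add_smul_sub_mem hx hy ⟨hs0, hs1⟩
  have hy' := hg y hy z hz
  have hx' := hg x hx z hz
  rw [show y - z = (1 - s) • (y - x) by module, real_inner_smul_right] at hy'
  rw [show x - z = (-s) • (y - x) by module, real_inner_smul_right] at hx'
  nlinarith [mul_le_mul_of_nonneg_left hy' hs0, mul_le_mul_of_nonneg_left hx' (sub_nonneg.2 hs1),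
    mul_nonneg (sub_nonneg.2 hs1) (mul_nonneg hμ (hD z x))]

variable [CompleteSpace E] {ω : E → ℝ} {ω' : E → E}

theorem HasGradientAt.hasDerivAt_comp_add_smul {g x v : E} {t : ℝ}
    (h : HasGradientAt ω g (x + t • v)) :
    HasDerivAt (fun s : ℝ => ω (x + s • v)) ⟪g, v⟫ t := by
  have hline : HasDerivAt (fun s : ℝ => x + s • v) v t := by
    simpa using ((hasDerivAt_id t).smul_const v).const_add x
  have hcomp := h.hasFDerivAt.comp_hasDerivAt t hline
  simp only [toDual_apply_apply] at hcomp
  exact hcomp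

theorem ConvexOn.add_inner_le_of_hasGradientAt {g x : E}
    (hω : ConvexOn ℝ univ ω) (h : HasGradientAt ω g x) (y : E) :
    ω x + ⟪g, y - x⟫ ≤ ω y := by
  have hderiv := HasGradientAt.hasDerivAt_comp_add_smul (v := y - x) (t := 0) (by simpa using h)
  have := (hω.comp_add_smul x (y - x)).le_slope_of_hasDerivAt trivial trivial zero_lt_one hderiv
  simp only [slope_def_field, one_smul, add_sub_cancel, zero_smul, add_zero, sub_zero, div_one]
    at this
  linarith

theorem bregmanDiv_nonneg (hω : ∀ x, HasGradientAt ω (ω' x) x) (hωconv : ConvexOn ℝ univ ω)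
    (x y : E) : 0 ≤ bregmanDiv ω ω' x y := by
  have := hωconv.add_inner_le_of_hasGradientAt (hω x) y
  unfold bregmanDiv
  linarith

theorem hasDerivAt_bregmanDiv_add_smul {x : E} (hx : HasGradientAt ω (ω' x) x) (z v : E) :
    HasDerivAt (fun s : ℝ => bregmanDiv ω ω' z (x + s • v)) ⟪ω' x - ω' z, v⟫ 0 := by
  have hline := HasGradientAt.hasDerivAt_comp_add_smul (v := v) (t := 0) (by simpa using hx)
  have hlin : HasDerivAt (fun s : ℝ => ω z + ⟪ω' z, x - z⟫ + s * ⟪ω' z, v⟫) ⟪ω' z, v⟫ 0 := by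
    simpa using (hasDerivAt_mul_const ⟪ω' z, v⟫).const_add (ω z + ⟪ω' z, x - z⟫)
  have hdiff := hline.sub hlin
  rw [← inner_sub_left] at hdiff
  refine hdiff.congr_of_eventuallyEq (Eventually.of_forall fun s => ?_)
  simp only [bregmanDiv, Pi.sub_apply, show x + s • v - z = (x - z) + s • v by abel,
    inner_add_right, real_inner_smul_right]
  ring

/-- Only derivatives of `ω` along the segment enter, and these are right-continuous by
convexity. -/
theorem tendsto_bregmanDiv_add_smul_sub (hω : ∀ x, HasGradientAt ω (ω' x) x)
    (hωconv : ConvexOn ℝ univ ω) (x y : E) :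
    Tendsto (fun s : ℝ => bregmanDiv ω ω' (x + s • (y - x)) y) (𝓝[>] 0)
      (𝓝 (bregmanDiv ω ω' x y)) := by
  set φ : ℝ → ℝ := fun s => ω (x + s • (y - x))
  set φ' : ℝ → ℝ := fun s => ⟪ω' (x + s • (y - x)), y - x⟫
  have hφ : ∀ s, HasDerivAt φ (φ' s) s := fun s => (hω _).hasDerivAt_comp_add_smul
  have hφ' := (hωconv.comp_add_smul x (y - x)).tendsto_deriv_nhdsGT hφ 0
  have hφc : Tendsto φ (𝓝[>] 0) (𝓝 (φ 0)) :=
    (hφ 0).continuousAt.tendsto.mono_left nhdsWithin_le_nhds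
  have hs : Tendsto (fun s : ℝ => s) (𝓝[>] 0) (𝓝 0) := nhdsWithin_le_nhds
  have hform : ∀ s : ℝ, bregmanDiv ω ω' (x + s • (y - x)) y = ω y - φ s - (1 - s) * φ' s := by
    intro s
    simp only [bregmanDiv, φ, φ', show y - (x + s • (y - x)) = (1 - s) • (y - x) by module,
      real_inner_smul_right]
  have h0 : bregmanDiv ω ω' x y = ω y - φ 0 - (1 - 0) * φ' 0 := by
    simp [bregmanDiv, φ, φ']
  simp only [hform, h0]
  exact (tendsto_const_nhds.sub hφc).sub ((tendsto_const_nhds.sub hs).mul hφ')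

theorem bregman_prox_three_point {Y : Set E} (hY : Convex ℝ Y)
    (hω : ∀ x, HasGradientAt ω (ω' x) x) (hωconv : ConvexOn ℝ univ ω)
    {g : E → ℝ} {g' : E → E} {μ τ : ℝ} (hμ : 0 ≤ μ)
    (hg : ∀ y ∈ Y, ∀ z ∈ Y, g y - g z - ⟪g' z, y - z⟫ ≥ μ * bregmanDiv ω ω' z y)
    {π ybar yhat : E} (hyhat : yhat ∈ Y)
    (hmin : ∀ y ∈ Y, ⟪π, yhat⟫ + g yhat + τ * bregmanDiv ω ω' ybar yhat ≤
      ⟪π, y⟫ + g y + τ * bregmanDiv ω ω' ybar y)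
    {y : E} (hy : y ∈ Y) :
    ⟪yhat - y, π⟫ + g yhat - g y ≤ τ * bregmanDiv ω ω' ybar y
      - (τ + μ) * bregmanDiv ω ω' yhat y - τ * bregmanDiv ω ω' ybar yhat := by
  set D := bregmanDiv ω ω'
  set v := y - yhat
  have hnonneg : ∀ s ∈ Ioc (0 : ℝ) 1, 0 ≤ ⟪π, v⟫ + (g y - g yhat) - μ * D (yhat + s • v) y
      + τ * (s⁻¹ * (D ybar (yhat + s • v) - D ybar yhat)) := by
    rintro s ⟨hs0, hs1⟩
    have hseg := apply_add_smul_sub_le_of_subgradient hY hμ (bregmanDiv_nonneg hω hωconv) hg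
      hyhat hy hs0.le hs1
    have hopt := hmin _ (hY.add_smul_sub_mem hyhat hy ⟨hs0.le, hs1⟩)
    rw [inner_add_right, real_inner_smul_right] at hopt
    rw [← mul_nonneg_iff_of_pos_left hs0, mul_add, mul_left_comm s τ, ← mul_assoc s,
      mul_inv_cancel₀ hs0.ne', one_mul]
    linarith
  have hlim : Tendsto (fun s : ℝ => ⟪π, v⟫ + (g y - g yhat) - μ * D (yhat + s • v) y
      + τ * (s⁻¹ * (D ybar (yhat + s • v) - D ybar yhat))) (𝓝[>] 0)
      (𝓝 (⟪π, v⟫ + (g y - g yhat) - μ * D yhat y + τ * ⟪ω' yhat - ω' ybar, v⟫)) := by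
    have hslope := (hasDerivAt_bregmanDiv_add_smul (hω yhat) ybar v).tendsto_slope_zero_right
    simp only [zero_add, zero_smul, add_zero, smul_eq_mul] at hslope
    exact (tendsto_const_nhds.sub
      ((tendsto_bregmanDiv_add_smul_sub hω hωconv yhat y).const_mul μ)).add (hslope.const_mul τ)
  have hfirst_order := ge_of_tendsto hlim
    (eventually_of_mem (Ioc_mem_nhdsGT zero_lt_one) hnonneg)
  have hthree : D ybar y - D ybar yhat - D yhat y = ⟪ω' yhat - ω' ybar, v⟫ :=
    bregmanDiv_three_point ω ω' yhat y ybar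
  rw [real_inner_comm, show yhat - y = -v by simp [v], inner_neg_right]
  linear_combination hfirst_order - τ * hthree

end

theorem stmt_4_general {n : ℕ}
    (Y : Set (EuclideanSpace ℝ (Fin n))) (hYconv : Convex ℝ Y)
    (ω : EuclideanSpace ℝ (Fin n) → ℝ)
    (ω' : EuclideanSpace ℝ (Fin n) → EuclideanSpace ℝ (Fin n))
    (hω : ∀ x, HasGradientAt ω (ω' x) x)
    (hωconv : ConvexOn ℝ Set.univ ω)
    (V : EuclideanSpace ℝ (Fin n) → EuclideanSpace ℝ (Fin n) → ℝ)
    (hV : ∀ x y, V x y = ω y - ω x - (inner ℝ (ω' x) (y - x) : ℝ))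
    (g : EuclideanSpace ℝ (Fin n) → ℝ)
    (g' : EuclideanSpace ℝ (Fin n) → EuclideanSpace ℝ (Fin n))
    (μ τ : ℝ) (hμ : 0 ≤ μ)
    -- g is μ-strongly convex with respect to V (with subgradient selection g')
    (hg : ∀ y ∈ Y, ∀ ybar ∈ Y,
      g y - g ybar - (inner ℝ (g' ybar) (y - ybar) : ℝ) ≥ μ * V ybar y)
    (π ybar : EuclideanSpace ℝ (Fin n))
    (yhat : EuclideanSpace ℝ (Fin n)) (hyhat : yhat ∈ Y)
    -- ŷ minimizes ⟨π, y⟩ + g(y) + τ V(ȳ, y) over Y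
    (hmin : ∀ y ∈ Y,
      (inner ℝ π yhat : ℝ) + g yhat + τ * V ybar yhat ≤
        (inner ℝ π y : ℝ) + g y + τ * V ybar y) :
    ∀ y ∈ Y, (inner ℝ (yhat - y) π : ℝ) + g yhat - g y ≤
      τ * V ybar y - (τ + μ) * V yhat y - τ * V ybar yhat := by
  obtain rfl : V = bregmanDiv ω ω' := funext₂ hV
  exact fun y hy => bregman_prox_three_point hYconv hω hωconv hμ hg hyhat hmin hy

/-- Three-point inequality for Bregman proximal steps: if `g : Y → ℝ` is `μ`-strongly
convex with respect to a Bregman distance `V` generated by a convex differentiable `ω`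
and `ŷ ∈ argmin_{y ∈ Y} {⟨π, y⟩ + g(y) + τ V(ȳ, y)}`, then for all `y ∈ Y`:
`⟨ŷ − y, π⟩ + g(ŷ) − g(y) ≤ τ V(ȳ, y) − (τ + μ) V(ŷ, y) − τ V(ȳ, ŷ)`. -/
theorem stmt_4 {n : ℕ}
    (Y : Set (EuclideanSpace ℝ (Fin n))) (hYconv : Convex ℝ Y) (hYclosed : IsClosed Y)
    (ω : EuclideanSpace ℝ (Fin n) → ℝ)
    (ω' : EuclideanSpace ℝ (Fin n) → EuclideanSpace ℝ (Fin n))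
    (hω : ∀ x, HasGradientAt ω (ω' x) x)
    (hωconv : ConvexOn ℝ Set.univ ω)
    (V : EuclideanSpace ℝ (Fin n) → EuclideanSpace ℝ (Fin n) → ℝ)
    (hV : ∀ x y, V x y = ω y - ω x - (inner ℝ (ω' x) (y - x) : ℝ))
    (g : EuclideanSpace ℝ (Fin n) → ℝ)
    (g' : EuclideanSpace ℝ (Fin n) → EuclideanSpace ℝ (Fin n))
    (μ τ : ℝ) (hμ : 0 ≤ μ) (hτ : 0 ≤ τ)
    -- g is μ-strongly convex with respect to V (with subgradient selection g')
    (hg : ∀ y ∈ Y, ∀ ybar ∈ Y,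
      g y - g ybar - (inner ℝ (g' ybar) (y - ybar) : ℝ) ≥ μ * V ybar y)
    (π ybar : EuclideanSpace ℝ (Fin n)) (hybar : ybar ∈ Y)
    (yhat : EuclideanSpace ℝ (Fin n)) (hyhat : yhat ∈ Y)
    -- ŷ minimizes ⟨π, y⟩ + g(y) + τ V(ȳ, y) over Y
    (hmin : ∀ y ∈ Y,
      (inner ℝ π yhat : ℝ) + g yhat + τ * V ybar yhat ≤
        (inner ℝ π y : ℝ) + g y + τ * V ybar y) :
    ∀ y ∈ Y, (inner ℝ (yhat - y) π : ℝ) + g yhat - g y ≤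
      τ * V ybar y - (τ + μ) * V yhat y - τ * V ybar yhat :=
  stmt_4_general Y hYconv ω ω' hω hωconv V hV g g' μ τ hμ hg π ybar yhat hyhat hmin
end

section
/- Martingale noise bound: let (δᵗ)_{t=0}^{N−1} be a martingale-difference sequence with E[δᵗ | ℱₜ] = 0 and E[‖δᵗ‖² | ℱₜ] ≤ σ² for all t, and let π̂ be a random vector in a bounded set Π with M_Π = max_{π∈Π}‖π‖ (π̂ may be correlated with the δᵗ). Then E[Σ_{t=0}^{N−1} ⟨π̂, δᵗ⟩] ≤ √N · M_Π · σ. -/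
/-!
With `S = ∑_{t<N} δᵗ` the integrand is `⟨π̂, S⟩ ≤ M ‖S‖` pointwise, so the correlation between
`π̂` and the noise is harmless. Each partial sum `∑_{t<k} δᵗ` is `ℱₖ`-measurable while
`E[δᵏ | ℱₖ] = 0`, so by the pull-out property the cross terms vanish and
`E‖S‖² = ∑ E‖δᵗ‖² ≤ N σ²`; finally `E‖S‖ ≤ √(E‖S‖²)`.
-/

open MeasureTheory Finset

namespace MeasureTheory

variable {Ω E : Type*} {m m0 : MeasurableSpace Ω} {μ : Measure Ω}
  [NormedAddCommGroup E] [InnerProductSpace ℝ E]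

lemma MemLp.integrable_inner {f g : Ω → E} (hf : MemLp f 2 μ) (hg : MemLp g 2 μ) :
    Integrable (fun ω => inner ℝ (f ω) (g ω)) μ :=
  memLp_one_iff_integrable.1 ((innerSL ℝ).memLp_of_bilin 1 hf hg)

lemma integral_inner_eq_zero_of_condExp_eq_zero [CompleteSpace E] [IsFiniteMeasure μ]
    (hm : m ≤ m0) {f g : Ω → E} (hfm : StronglyMeasurable[m] f) (hf : MemLp f 2 μ)
    (hg : MemLp g 2 μ) (hg0 : μ[g | m] =ᵐ[μ] 0) :
    ∫ ω, inner ℝ (f ω) (g ω) ∂μ = 0 := by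
  have hpull := condExp_bilin_of_stronglyMeasurable_left (innerSL ℝ) hfm
    (hf.integrable_inner hg) (hg.integrable one_le_two)
  calc ∫ ω, inner ℝ (f ω) (g ω) ∂μ
      = ∫ ω, (μ[fun ω => inner ℝ (f ω) (g ω) | m]) ω ∂μ := (integral_condExp hm).symm
    _ = ∫ ω, inner ℝ (f ω) ((μ[g | m]) ω) ∂μ := integral_congr_ae hpull
    _ = 0 := by
      rw [integral_eq_zero_of_ae]
      filter_upwards [hg0] with ω hω
      simp [hω]

lemma integral_le_of_condExp_le [IsProbabilityMeasure μ] (hm : m ≤ m0) {f : Ω → ℝ} {c : ℝ}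
    (hf : ∀ᵐ ω ∂μ, (μ[f | m]) ω ≤ c) :
    ∫ ω, f ω ∂μ ≤ c := by
  rw [← integral_condExp hm]
  simpa using integral_mono_ae integrable_condExp (integrable_const c) hf

lemma integral_le_sqrt_integral_sq [IsProbabilityMeasure μ] {f : Ω → ℝ} (hf : MemLp f 2 μ) :
    ∫ ω, f ω ∂μ ≤ Real.sqrt (∫ ω, f ω ^ 2 ∂μ) := by
  have hvar := ProbabilityTheory.variance_nonneg f μ
  rw [ProbabilityTheory.variance_eq_sub hf] at hvar
  refine Real.le_sqrt_of_sq_le ?_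
  simpa using hvar

lemma stronglyMeasurable_sum_range_of_adapted_succ {M : Type*} [AddCommMonoid M]
    [TopologicalSpace M] [ContinuousAdd M] {ℱ : Filtration ℕ m0} {δ : ℕ → Ω → M}
    (hadapt : ∀ t, StronglyMeasurable[ℱ (t + 1)] (δ t)) (N : ℕ) :
    StronglyMeasurable[ℱ N] (fun ω => ∑ t ∈ range N, δ t ω) :=
  Finset.stronglyMeasurable_fun_sum _ fun t ht =>
    (hadapt t).mono (ℱ.mono (Nat.succ_le_of_lt (mem_range.1 ht)))

lemma integral_norm_sum_range_sq [CompleteSpace E] [IsFiniteMeasure μ] {ℱ : Filtration ℕ m0}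
    {δ : ℕ → Ω → E} (hadapt : ∀ t, StronglyMeasurable[ℱ (t + 1)] (δ t))
    (hmean : ∀ t, μ[δ t | ℱ t] =ᵐ[μ] 0) (hL2 : ∀ t, MemLp (δ t) 2 μ) (N : ℕ) :
    ∫ ω, ‖∑ t ∈ range N, δ t ω‖ ^ 2 ∂μ = ∑ t ∈ range N, ∫ ω, ‖δ t ω‖ ^ 2 ∂μ := by
  induction N with
  | zero => simp
  | succ N ih =>
    have hS : MemLp (fun ω => ∑ t ∈ range N, δ t ω) 2 μ :=
      memLp_finsetSum _ fun t _ => hL2 t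
    have hcross : ∫ ω, inner ℝ (∑ t ∈ range N, δ t ω) (δ N ω) ∂μ = 0 :=
      integral_inner_eq_zero_of_condExp_eq_zero (ℱ.le N)
        (stronglyMeasurable_sum_range_of_adapted_succ hadapt N) hS (hL2 N) (hmean N)
    have hS_sq := hS.integrable_norm_pow two_ne_zero
    have hδ_sq := (hL2 N).integrable_norm_pow two_ne_zero
    have hcross_int := (hS.integrable_inner (hL2 N)).const_mul 2
    simp_rw [sum_range_succ, norm_add_sq_real]
    rw [integral_add _ hδ_sq, integral_add hS_sq hcross_int, integral_const_mul, hcross, ih]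
    · ring
    · exact hS_sq.add hcross_int

end MeasureTheory

theorem stmt_8_general {Ω : Type*} {m0 : MeasurableSpace Ω} (μ : Measure Ω)
    [IsProbabilityMeasure μ]
    {n : ℕ} (N : ℕ) (ℱ : Filtration ℕ m0)
    (δ : ℕ → Ω → EuclideanSpace ℝ (Fin n))
    (hadapt : ∀ t, StronglyMeasurable[ℱ (t + 1)] (δ t))
    (σ M : ℝ) (hσ : 0 ≤ σ) (hM : 0 ≤ M)
    -- E[δᵗ | ℱₜ] = 0
    (hmean : ∀ t, μ[δ t | ℱ t] =ᵐ[μ] 0)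
    -- E[‖δᵗ‖² | ℱₜ] ≤ σ²
    (hvar : ∀ t, ∀ᵐ ω ∂μ, (μ[fun ω' => ‖δ t ω'‖ ^ 2 | ℱ t]) ω ≤ σ ^ 2)
    (hsq : ∀ t, Integrable (fun ω => ‖δ t ω‖ ^ 2) μ)
    (P : Set (EuclideanSpace ℝ (Fin n)))
    (hPbdd : ∀ p ∈ P, ‖p‖ ≤ M)
    (πhat : Ω → EuclideanSpace ℝ (Fin n))
    (hπmem : ∀ ω, πhat ω ∈ P)
    (hint : ∀ t, Integrable (fun ω => (inner ℝ (πhat ω) (δ t ω) : ℝ)) μ) :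
    ∫ ω, (∑ t ∈ Finset.range N, (inner ℝ (πhat ω) (δ t ω) : ℝ)) ∂μ ≤
      Real.sqrt N * M * σ := by
  set S := fun ω => ∑ t ∈ range N, δ t ω
  have hL2 : ∀ t, MemLp (δ t) 2 μ := fun t =>
    (memLp_two_iff_integrable_sq_norm ((hadapt t).mono (ℱ.le _)).aestronglyMeasurable).2 (hsq t)
  have hS : MemLp S 2 μ := memLp_finsetSum _ fun t _ => hL2 t
  have hS_sq : ∫ ω, ‖S ω‖ ^ 2 ∂μ ≤ N * σ ^ 2 := by
    rw [integral_norm_sum_range_sq hadapt hmean hL2 N]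
    simpa using sum_le_sum fun t (_ : t ∈ range N) => integral_le_of_condExp_le (ℱ.le t) (hvar t)
  have hpointwise : ∀ ω, ∑ t ∈ range N, inner ℝ (πhat ω) (δ t ω) ≤ M * ‖S ω‖ := fun ω => by
    rw [← inner_sum]
    exact (real_inner_le_norm _ _).trans
      (mul_le_mul_of_nonneg_right (hPbdd _ (hπmem ω)) (norm_nonneg _))
  calc ∫ ω, ∑ t ∈ range N, inner ℝ (πhat ω) (δ t ω) ∂μ
      ≤ ∫ ω, M * ‖S ω‖ ∂μ :=
        integral_mono (integrable_finsetSum _ fun t _ => hint t)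
          ((hS.integrable one_le_two).norm.const_mul M) hpointwise
    _ = M * ∫ ω, ‖S ω‖ ∂μ := integral_const_mul M _
    _ ≤ M * Real.sqrt (N * σ ^ 2) := by
        gcongr
        exact (integral_le_sqrt_integral_sq hS.norm).trans (Real.sqrt_le_sqrt hS_sq)
    _ = Real.sqrt N * M * σ := by
        rw [Real.sqrt_mul (Nat.cast_nonneg N), Real.sqrt_sq hσ]
        ring

/-- Martingale noise bound: if `(δᵗ)` is a martingale-difference sequence with
`E[δᵗ | ℱₜ] = 0` and `E[‖δᵗ‖² | ℱₜ] ≤ σ²`, and `π̂` is a random vector taking values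
in a bounded set `Π` with `‖π‖ ≤ M_Π` on `Π` (possibly correlated with the `δᵗ`), then
`E[Σ_{t<N} ⟨π̂, δᵗ⟩] ≤ √N · M_Π · σ`. -/
theorem stmt_8 {Ω : Type*} {m0 : MeasurableSpace Ω} (μ : Measure Ω)
    [IsProbabilityMeasure μ]
    {n : ℕ} (N : ℕ) (ℱ : Filtration ℕ m0)
    (δ : ℕ → Ω → EuclideanSpace ℝ (Fin n))
    (hadapt : ∀ t, StronglyMeasurable[ℱ (t + 1)] (δ t))
    (σ M : ℝ) (hσ : 0 ≤ σ) (hM : 0 ≤ M)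
    -- E[δᵗ | ℱₜ] = 0
    (hmean : ∀ t, μ[δ t | ℱ t] =ᵐ[μ] 0)
    -- E[‖δᵗ‖² | ℱₜ] ≤ σ²
    (hvar : ∀ t, ∀ᵐ ω ∂μ, (μ[fun ω' => ‖δ t ω'‖ ^ 2 | ℱ t]) ω ≤ σ ^ 2)
    (hsq : ∀ t, Integrable (fun ω => ‖δ t ω‖ ^ 2) μ)
    (P : Set (EuclideanSpace ℝ (Fin n))) (hP : IsCompact P)
    (hPbdd : ∀ p ∈ P, ‖p‖ ≤ M)
    (πhat : Ω → EuclideanSpace ℝ (Fin n))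
    (hπmeas : AEStronglyMeasurable πhat μ)
    (hπmem : ∀ ω, πhat ω ∈ P)
    (hint : ∀ t, Integrable (fun ω => (inner ℝ (πhat ω) (δ t ω) : ℝ)) μ) :
    ∫ ω, (∑ t ∈ Finset.range N, (inner ℝ (πhat ω) (δ t ω) : ℝ)) ∂μ ≤
      Real.sqrt N * M * σ :=
  stmt_8_general μ N ℱ δ hadapt σ M hσ hM hmean hvar hsq P hPbdd πhat hπmem hint
end

section
/- Strongly convex gap conversion with smooth outer layer: under the two-layer setup with f₁ being L_{f₁}-smooth and f₂ being M_{Π₂}-Lipschitz, if z̃ = (x*; π₁*, π̂₂) with π₁* ∈ ∂f₁(f₂(x*)) and π̂₂ ∈ ∂f₂(x̄ᴺ), Σᵗ wᵗ Q(z^{t+1}, z̃) ≤ B and (1/2)‖x̄ᴺ − x*‖² ≤ C, then f(x̄ᴺ) − f(x*) ≤ B/(Σᵗ wᵗ) + L_{f₁} M_{Π₂}² C. -/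
/-!
With `π₁*` and `π̂₂` satisfying the Fenchel–Young equalities at `f₂ x*` and `x̄`, the primal
gap `f(x̄) − L̃(π₁*, π̂₂, x̄)` is exactly the Bregman divergence `D_{f₁}(f₂ x̄, f₂ x*)`, which
smoothness of `f₁` and the Lipschitz bound on `f₂` control by `L_{f₁} M_{Π₂}² C`. The remaining
part `L̃(π₁*, π̂₂, x̄) − f(x*)` is bounded by `B / Σ wᵗ`: `L̃(π₁*, π̂₂, ·)` is convex, so Jensen
moves it inside the weighted average, and weak duality replaces `f(x*)` by `L̃(πᵗ⁺¹, x*)`.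
-/

open Finset

section NestedLagrangian

variable {ι κ : Type*} [Fintype ι] [Fintype κ]

def nestedLagrangian (f₁star : (κ → ℝ) → ℝ) (f₂star : (κ → ι → ℝ) → κ → ℝ)
    (u : EuclideanSpace ℝ ι → ℝ) (p₁ : κ → ℝ) (p₂ : κ → ι → ℝ) (y : EuclideanSpace ℝ ι) : ℝ :=
  (∑ j, p₁ j * ((∑ i, p₂ j i * y i) - f₂star p₂ j)) - f₁star p₁ + u y

theorem convexOn_nestedLagrangian {f₁star : (κ → ℝ) → ℝ} {f₂star : (κ → ι → ℝ) → κ → ℝ}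
    {u : EuclideanSpace ℝ ι → ℝ} (hu : ConvexOn ℝ Set.univ u) (p₁ : κ → ℝ) (p₂ : κ → ι → ℝ) :
    ConvexOn ℝ Set.univ (nestedLagrangian f₁star f₂star u p₁ p₂) := by
  let ℓ : EuclideanSpace ℝ ι →ₗ[ℝ] ℝ :=
    ∑ j, p₁ j • ∑ i, p₂ j i • (EuclideanSpace.proj i : EuclideanSpace ℝ ι →L[ℝ] ℝ).toLinearMap
  have hℓ : nestedLagrangian f₁star f₂star u p₁ p₂ =
      (⇑ℓ + u) + fun _ => -(∑ j, p₁ j * f₂star p₂ j + f₁star p₁) := by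
    funext y
    simp only [nestedLagrangian, mul_sub, sum_sub_distrib, LinearMap.coe_sum, LinearMap.coe_smul,
      ContinuousLinearMap.coe_coe, EuclideanSpace.coe_proj, Pi.add_apply, Finset.sum_apply,
      Pi.smul_apply, smul_eq_mul, ℓ]
    ring
  rw [hℓ]
  exact ((ℓ.convexOn convex_univ).add hu).add_const _

theorem primal_sub_nestedLagrangian_eq_bregman {f₁ : EuclideanSpace ℝ κ → ℝ}
    {f₂ : EuclideanSpace ℝ ι → EuclideanSpace ℝ κ} {f₁star : (κ → ℝ) → ℝ}
    {f₂star : (κ → ι → ℝ) → κ → ℝ} (u : EuclideanSpace ℝ ι → ℝ) {p₁ : κ → ℝ} {p₂ : κ → ι → ℝ}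
    {x y : EuclideanSpace ℝ ι}
    (hFY₂ : ∀ j, (∑ i, p₂ j i * y i) - f₂star p₂ j = f₂ y j)
    (hFY₁ : f₁star p₁ = (∑ j, p₁ j * f₂ x j) - f₁ (f₂ x)) :
    f₁ (f₂ y) + u y - nestedLagrangian f₁star f₂star u p₁ p₂ y =
      f₁ (f₂ y) - f₁ (f₂ x) - ∑ j, p₁ j * (f₂ y j - f₂ x j) := by
  simp only [nestedLagrangian, hFY₂, hFY₁, mul_sub, sum_sub_distrib]
  ring

end NestedLagrangian

theorem ConvexOn.map_centerMass_sub_le_div {ι E : Type*} [AddCommGroup E] [Module ℝ E]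
    {g : E → ℝ} (hg : ConvexOn ℝ Set.univ g) {s : Finset ι} {w : ι → ℝ}
    (hw : ∀ i ∈ s, 0 ≤ w i) (hW : 0 < ∑ i ∈ s, w i) {x : ι → E} {h : ι → ℝ} {v B : ℝ}
    (hv : ∀ i ∈ s, h i ≤ v) (hB : ∑ i ∈ s, w i * (g (x i) - h i) ≤ B) :
    g (s.centerMass w x) - v ≤ B / ∑ i ∈ s, w i := by
  have hJensen : g (s.centerMass w x) ≤ s.centerMass w (g ∘ x) :=
    hg.map_centerMass_le hw hW fun i _ => Set.mem_univ _
  have hsum : ∑ i ∈ s, w i * g (x i) ≤ B + (∑ i ∈ s, w i) * v := calc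
    ∑ i ∈ s, w i * g (x i) = ∑ i ∈ s, w i * (g (x i) - v) + (∑ i ∈ s, w i) * v := by
      simp only [mul_sub, sum_sub_distrib, sum_mul]; ring
    _ ≤ ∑ i ∈ s, w i * (g (x i) - h i) + (∑ i ∈ s, w i) * v := by
      gcongr with i hi
      · exact hw i hi
      · exact hv i hi
    _ ≤ B + (∑ i ∈ s, w i) * v := by gcongr
  have hcm : s.centerMass w (g ∘ x) = (∑ i ∈ s, w i * g (x i)) / ∑ i ∈ s, w i := by
    simp [centerMass, div_eq_inv_mul]
  rw [hcm] at hJensen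
  rw [le_div_iff₀ hW] at hJensen ⊢
  linarith

theorem bregman_le_of_smooth_of_lipschitz {E F : Type*} [SeminormedAddCommGroup E]
    [SeminormedAddCommGroup F] {D Lf M C : ℝ} {a b : F} {x y : E} (hLf : 0 ≤ Lf)
    (hsm : D ≤ Lf / 2 * ‖b - a‖ ^ 2) (hLip : ‖b - a‖ ≤ M * ‖y - x‖)
    (hC : 1 / 2 * ‖y - x‖ ^ 2 ≤ C) : D ≤ Lf * M ^ 2 * C := calc
  D ≤ Lf / 2 * ‖b - a‖ ^ 2 := hsm
  _ ≤ Lf / 2 * (M * ‖y - x‖) ^ 2 := by gcongr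
  _ = Lf * M ^ 2 * (1 / 2 * ‖y - x‖ ^ 2) := by ring
  _ ≤ Lf * M ^ 2 * C := by gcongr

theorem stmt_10_general {n m N : ℕ} (hN : 0 < N)
    (f₁ : EuclideanSpace ℝ (Fin m) → ℝ)
    (f₂ : EuclideanSpace ℝ (Fin n) → EuclideanSpace ℝ (Fin m))
    (u : EuclideanSpace ℝ (Fin n) → ℝ) (hu : ConvexOn ℝ Set.univ u)
    (f₁star : (Fin m → ℝ) → ℝ) (f₂star : (Fin m → Fin n → ℝ) → Fin m → ℝ)
    (x : ℕ → EuclideanSpace ℝ (Fin n))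
    (π₁ : ℕ → Fin m → ℝ) (π₂ : ℕ → Fin m → Fin n → ℝ)
    (w : ℕ → ℝ) (hw : ∀ t, 0 < w t)
    (xstar xbar : EuclideanSpace ℝ (Fin n))
    (hxbar : xbar = (∑ t ∈ Finset.range N, w t)⁻¹ •
      ∑ t ∈ Finset.range N, w t • x (t + 1))
    (π₁star : Fin m → ℝ) (π₂hat : Fin m → Fin n → ℝ)
    -- the two-layer nested Lagrangian L̃
    (L : (Fin m → ℝ) → (Fin m → Fin n → ℝ) → EuclideanSpace ℝ (Fin n) → ℝ)
    (hL : ∀ p₁ p₂ y, L p₁ p₂ y =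
      (∑ j, p₁ j * ((∑ i, p₂ j i * y i) - f₂star p₂ j)) - f₁star p₁ + u y)
    (Lf₁ MP₂ : ℝ) (hLf₁ : 0 ≤ Lf₁)
    -- f₂ is M_{Π₂}-Lipschitz
    (hLip₂ : ∀ x1 x2, ‖f₂ x1 - f₂ x2‖ ≤ MP₂ * ‖x1 - x2‖)
    -- Fenchel–Young equality for π̂₂ ∈ ∂f₂(x̄ᴺ)
    (hFY₂ : ∀ j, (∑ i, π₂hat j i * xbar i) - f₂star π₂hat j = f₂ xbar j)
    -- Fenchel–Young equality for π₁* ∈ ∂f₁(f₂(x*))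
    (hFY₁ : f₁star π₁star = (∑ j, π₁star j * f₂ xstar j) - f₁ (f₂ xstar))
    -- L_{f₁}-smoothness: D_{f₁}(f₂(x*), b) ≤ (L_{f₁}/2)‖b − f₂(x*)‖²
    (hsm : ∀ b : EuclideanSpace ℝ (Fin m),
      f₁ b - f₁ (f₂ xstar) - (∑ j, π₁star j * (b j - f₂ xstar j)) ≤
        Lf₁ / 2 * ‖b - f₂ xstar‖ ^ 2)
    -- weak duality at x*
    (hweak : ∀ t, f₁ (f₂ xstar) + u xstar ≥ L (π₁ (t + 1)) (π₂ (t + 1)) xstar)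
    (B C : ℝ)
    (hB : ∑ t ∈ Finset.range N,
        w t * (L π₁star π₂hat (x (t + 1)) - L (π₁ (t + 1)) (π₂ (t + 1)) xstar) ≤ B)
    (hC : (1 / 2) * ‖xbar - xstar‖ ^ 2 ≤ C) :
    (f₁ (f₂ xbar) + u xbar) - (f₁ (f₂ xstar) + u xstar) ≤
      B / (∑ t ∈ Finset.range N, w t) + Lf₁ * MP₂ ^ 2 * C := by
  obtain rfl : L = nestedLagrangian f₁star f₂star u := by
    funext p₁ p₂ y
    exact hL p₁ p₂ y
  have hW : 0 < ∑ t ∈ range N, w t :=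
    sum_pos (fun t _ => hw t) (nonempty_range_iff.mpr hN.ne')
  have hbregman : f₁ (f₂ xbar) + u xbar -
      nestedLagrangian f₁star f₂star u π₁star π₂hat xbar ≤ Lf₁ * MP₂ ^ 2 * C := by
    rw [primal_sub_nestedLagrangian_eq_bregman u hFY₂ hFY₁]
    exact bregman_le_of_smooth_of_lipschitz hLf₁ (hsm _) (hLip₂ _ _) hC
  have hergodic : nestedLagrangian f₁star f₂star u π₁star π₂hat xbar -
      (f₁ (f₂ xstar) + u xstar) ≤ B / ∑ t ∈ range N, w t := by
    rw [show xbar = (range N).centerMass w fun t => x (t + 1) from hxbar]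
    exact (convexOn_nestedLagrangian hu π₁star π₂hat).map_centerMass_sub_le_div
      (fun t _ => (hw t).le) hW (fun t _ => hweak t) hB
  linarith

/-- Strongly convex gap conversion with smooth outer layer: with `f₁` `L_{f₁}`-smooth and
`f₂` `M_{Π₂}`-Lipschitz, if `z̃ = (x*; π₁*, π̂₂)`, `Σᵗ wᵗ Q(z^{t+1}, z̃) ≤ B` and
`(1/2)‖x̄ᴺ − x*‖² ≤ C`, then `f(x̄ᴺ) − f(x*) ≤ B/(Σᵗ wᵗ) + L_{f₁} M_{Π₂}² C`. -/
theorem stmt_10 {n m N : ℕ} (hN : 0 < N)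
    (f₁ : EuclideanSpace ℝ (Fin m) → ℝ)
    (f₂ : EuclideanSpace ℝ (Fin n) → EuclideanSpace ℝ (Fin m))
    (u : EuclideanSpace ℝ (Fin n) → ℝ) (hu : ConvexOn ℝ Set.univ u)
    (f₁star : (Fin m → ℝ) → ℝ) (f₂star : (Fin m → Fin n → ℝ) → Fin m → ℝ)
    (x : ℕ → EuclideanSpace ℝ (Fin n))
    (π₁ : ℕ → Fin m → ℝ) (π₂ : ℕ → Fin m → Fin n → ℝ)
    (w : ℕ → ℝ) (hw : ∀ t, 0 < w t)
    (xstar xbar : EuclideanSpace ℝ (Fin n))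
    (hxbar : xbar = (∑ t ∈ Finset.range N, w t)⁻¹ •
      ∑ t ∈ Finset.range N, w t • x (t + 1))
    (π₁star : Fin m → ℝ) (π₂hat : Fin m → Fin n → ℝ)
    -- the two-layer nested Lagrangian L̃
    (L : (Fin m → ℝ) → (Fin m → Fin n → ℝ) → EuclideanSpace ℝ (Fin n) → ℝ)
    (hL : ∀ p₁ p₂ y, L p₁ p₂ y =
      (∑ j, p₁ j * ((∑ i, p₂ j i * y i) - f₂star p₂ j)) - f₁star p₁ + u y)
    (Lf₁ MP₂ : ℝ) (hLf₁ : 0 ≤ Lf₁) (hMP₂ : 0 ≤ MP₂)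
    -- f₂ is M_{Π₂}-Lipschitz
    (hLip₂ : ∀ x1 x2, ‖f₂ x1 - f₂ x2‖ ≤ MP₂ * ‖x1 - x2‖)
    -- Fenchel–Young equality for π̂₂ ∈ ∂f₂(x̄ᴺ)
    (hFY₂ : ∀ j, (∑ i, π₂hat j i * xbar i) - f₂star π₂hat j = f₂ xbar j)
    -- Fenchel–Young equality for π₁* ∈ ∂f₁(f₂(x*))
    (hFY₁ : f₁star π₁star = (∑ j, π₁star j * f₂ xstar j) - f₁ (f₂ xstar))
    -- L_{f₁}-smoothness: D_{f₁}(f₂(x*), b) ≤ (L_{f₁}/2)‖b − f₂(x*)‖²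
    (hsm : ∀ b : EuclideanSpace ℝ (Fin m),
      f₁ b - f₁ (f₂ xstar) - (∑ j, π₁star j * (b j - f₂ xstar j)) ≤
        Lf₁ / 2 * ‖b - f₂ xstar‖ ^ 2)
    -- weak duality at x*
    (hweak : ∀ t, f₁ (f₂ xstar) + u xstar ≥ L (π₁ (t + 1)) (π₂ (t + 1)) xstar)
    (B C : ℝ)
    (hB : ∑ t ∈ Finset.range N,
        w t * (L π₁star π₂hat (x (t + 1)) - L (π₁ (t + 1)) (π₂ (t + 1)) xstar) ≤ B)
    (hC : (1 / 2) * ‖xbar - xstar‖ ^ 2 ≤ C) :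
    (f₁ (f₂ xbar) + u xbar) - (f₁ (f₂ xstar) + u xstar) ≤
      B / (∑ t ∈ Finset.range N, w t) + Lf₁ * MP₂ ^ 2 * C :=
  stmt_10_general hN f₁ f₂ u hu f₁star f₂star x π₁ π₂ w hw xstar xbar hxbar π₁star π₂hat L hL Lf₁
    MP₂ hLf₁ hLip₂ hFY₂ hFY₁ hsm hweak B C hB hC
end

section
/- Multi-layer weak duality: for the k-layer nested Lagrangian L(π_{1:k}; x) = L₁(π_{1:k}, x) + u(x), defined recursively by L_{k+1} = x and L_i(π_{i:k}, x) = π_i L_{i+1}(π_{i+1:k}, x) − f_i*(π_i), we have f(x) = f₁∘f₂∘⋯∘f_k(x) + u(x) ≥ L(π_{1:k}; x) for all feasible π_i ∈ Π_i, provided for every non-linear layer i the product π₁π₂⋯π_{i−1} is componentwise nonnegative for all feasible choices. -/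
/-!
Write `P_i = π₁ ⋯ π_i` and unfold the Lagrangian from the innermost layer outwards, keeping the
invariant `P_i L_{i+1} ≤ P_i (f_{i+1} ∘ ⋯ ∘ f_k)(x)`. Going from layer `i + 1` to layer `i`,
`P_{i-1} (π_i z - f_i*(π_i)) = P_i z - P_{i-1} f_i*(π_i)`, and the dual bound
`π_i y - f_i*(π_i) ≤ f_i(y)` may be multiplied by `P_{i-1}`: either `P_{i-1} ≥ 0`, or `f_i` is
affine, in which case every feasible dual matrix is its linear part and the bound is an equality.
At `i = 0` the weight is the identity.
-/

open Finset

/-- The product `π₁ π₂ ⋯ π_i` of the dual matrices (`π_{1:i}` in the paper,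
0-indexed here). -/
noncomputable def prodPi (d : ℕ → ℕ)
    (π : ∀ i, Matrix (Fin (d i)) (Fin (d (i + 1))) ℝ) :
    ∀ i, Matrix (Fin (d 0)) (Fin (d i)) ℝ
  | 0 => 1
  | (i + 1) => prodPi d π i * π i

/-- The partial composition of the layer functions: `compF k d f x j` is
`f_{k-j+1} ∘ ⋯ ∘ f_k (x)` (with 1-based paper indexing); at `j = k` it is the full
composition `f₁ ∘ ⋯ ∘ f_k (x)`. -/
noncomputable def compF (k : ℕ) (d : ℕ → ℕ)
    (f : ∀ i, (Fin (d (i + 1)) → ℝ) → (Fin (d i) → ℝ))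
    (x : Fin (d k) → ℝ) : ∀ j : ℕ, Fin (d (k - j)) → ℝ
  | 0 => x
  | (j + 1) =>
    if h : j + 1 ≤ k then
      f (k - (j + 1)) (fun b => compF k d f x j (Fin.cast (congrArg d (by omega)) b))
    else fun _ => 0

/-- The nested Lagrangian `L_i`, defined recursively by `L_{k+1} = x` and
`L_i(π_{i:k}, x) = π_i L_{i+1}(π_{i+1:k}, x) − f_i*(π_i)`; `nestedL k d π fstar x k`
is `L₁(π_{1:k}, x)`. -/
noncomputable def nestedL (k : ℕ) (d : ℕ → ℕ)
    (π : ∀ i, Matrix (Fin (d i)) (Fin (d (i + 1))) ℝ)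
    (fstar : ∀ i, Matrix (Fin (d i)) (Fin (d (i + 1))) ℝ → Fin (d i) → ℝ)
    (x : Fin (d k) → ℝ) : ∀ j : ℕ, Fin (d (k - j)) → ℝ
  | 0 => x
  | (j + 1) =>
    if h : j + 1 ≤ k then
      fun a =>
        (∑ b : Fin (d (k - j)),
          π (k - (j + 1)) a (Fin.cast (congrArg d (by omega)) b) *
            nestedL k d π fstar x j b)
        - fstar (k - (j + 1)) (π (k - (j + 1))) a
    else fun _ => 0

open Matrix

lemma eq_zero_of_forall_mul_add_nonneg {r s : ℝ} (h : ∀ t : ℝ, 0 ≤ r * t + s) : r = 0 := by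
  by_contra hr
  have := h ((-s - 1) / r)
  rw [mul_div_cancel₀ _ hr] at this
  linarith

section AffineLayer

variable {m n : Type*} [Fintype n]

lemma eq_of_forall_mulVec_sub_le [DecidableEq n] {A p : Matrix m n ℝ} {c s : m → ℝ}
    (h : ∀ y, p *ᵥ y - s ≤ A *ᵥ y + c) : p = A := by
  ext a b
  have hline : ∀ t : ℝ, 0 ≤ (A a b - p a b) * t + (c a + s a) := fun t => by
    have := h (Pi.single b t) a
    simp only [Pi.sub_apply, Pi.add_apply, mulVec_single, Pi.smul_apply, col_apply,
      MulOpposite.smul_eq_mul_unop, MulOpposite.unop_op] at this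
    linarith
  linarith [eq_zero_of_forall_mul_add_nonneg hline]

lemma affine_eq_mulVec_sub_conj {f : (n → ℝ) → m → ℝ} {Pdom : Set (Matrix m n ℝ)}
    {fstar : Matrix m n ℝ → m → ℝ}
    (hub : ∀ y, ∀ p ∈ Pdom, p *ᵥ y - fstar p ≤ f y)
    (hatt : ∀ y, ∃ p ∈ Pdom, f y = p *ᵥ y - fstar p)
    {A : Matrix m n ℝ} {c : m → ℝ} (hA : ∀ y, f y = A *ᵥ y + c)
    {p : Matrix m n ℝ} (hp : p ∈ Pdom) (y : n → ℝ) :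
    f y = p *ᵥ y - fstar p := by
  classical
  have hdom : ∀ q ∈ Pdom, q = A := fun q hq =>
    eq_of_forall_mulVec_sub_le fun y => hA y ▸ hub y q hq
  obtain ⟨q, hq, hfq⟩ := hatt 0
  have hconj : fstar p = -c := by
    rw [hA, hdom q hq, ← hdom p hp] at hfq
    simp only [mulVec_zero, zero_add, zero_sub] at hfq
    rw [hfq, neg_neg]
  rw [hA, hconj, hdom p hp, sub_neg_eq_add]

/-- For affine `f` the weights `P` may have any sign: the dual bound is then an equality. -/
lemma mulVec_sub_conj_le_mulVec {ι : Type*} {f : (n → ℝ) → m → ℝ}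
    {Pdom : Set (Matrix m n ℝ)} {fstar : Matrix m n ℝ → m → ℝ}
    (hub : ∀ y, ∀ p ∈ Pdom, p *ᵥ y - fstar p ≤ f y)
    (hatt : ∀ y, ∃ p ∈ Pdom, f y = p *ᵥ y - fstar p)
    {P : Matrix ι m ℝ} [Fintype m]
    (hP : (¬ ∃ (A : Matrix m n ℝ) (c : m → ℝ), ∀ y, f y = A *ᵥ y + c) → ∀ a b, 0 ≤ P a b)
    {p : Matrix m n ℝ} (hp : p ∈ Pdom) (y : n → ℝ) :
    P *ᵥ (p *ᵥ y - fstar p) ≤ P *ᵥ f y := by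
  by_cases haff : ∃ (A : Matrix m n ℝ) (c : m → ℝ), ∀ y, f y = A *ᵥ y + c
  · obtain ⟨A, c, hA⟩ := haff
    rw [affine_eq_mulVec_sub_conj hub hatt hA hp y]
  · exact fun a => dotProduct_le_dotProduct_of_nonneg_left (hub y p hp) (hP haff a)

end AffineLayer

section NestedLagrangian

variable {k : ℕ} {d : ℕ → ℕ}

lemma compF_succ (f : ∀ i, (Fin (d (i + 1)) → ℝ) → (Fin (d i) → ℝ)) (x : Fin (d k) → ℝ)
    {j : ℕ} (hj : j + 1 ≤ k) :
    compF k d f x (j + 1) =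
      f (k - (j + 1)) fun b => compF k d f x j (Fin.cast (congrArg d (by omega)) b) := by
  rw [compF, dif_pos hj]

lemma sum_mul_fin_cast {p q : ℕ} (h : p = q) (w : Fin (d p) → ℝ)
    (v : Fin (d q) → ℝ) :
    ∑ b : Fin (d q), w (Fin.cast (congrArg d h.symm) b) * v b =
      w ⬝ᵥ fun b => v (Fin.cast (congrArg d h) b) := by
  subst h; rfl

lemma nestedL_succ (π : ∀ i, Matrix (Fin (d i)) (Fin (d (i + 1))) ℝ)
    (fstar : ∀ i, Matrix (Fin (d i)) (Fin (d (i + 1))) ℝ → Fin (d i) → ℝ)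
    (x : Fin (d k) → ℝ) {j : ℕ} (hj : j + 1 ≤ k) :
    nestedL k d π fstar x (j + 1) =
      π (k - (j + 1)) *ᵥ (fun b => nestedL k d π fstar x j (Fin.cast (congrArg d (by omega)) b))
        - fstar (k - (j + 1)) (π (k - (j + 1))) := by
  ext a
  rw [nestedL, dif_pos hj, Pi.sub_apply, sum_mul_fin_cast (by omega)]
  rfl

lemma prodPi_mulVec_cast (π : ∀ i, Matrix (Fin (d i)) (Fin (d (i + 1))) ℝ) {p q : ℕ}
    (h : p = q) (v : Fin (d q) → ℝ) :
    prodPi d π q *ᵥ v = prodPi d π p *ᵥ fun b => v (Fin.cast (congrArg d h) b) := by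
  subst h; rfl

lemma prodPi_mulVec_apply_of_eq_zero (π : ∀ i, Matrix (Fin (d i)) (Fin (d (i + 1))) ℝ) {p : ℕ}
    (h : p = 0) (v : Fin (d p) → ℝ) (a : Fin (d p)) :
    (prodPi d π p *ᵥ v) (Fin.cast (congrArg d h) a) = v a := by
  subst h; simp [prodPi]

lemma prodPi_mulVec_nestedL_le (f : ∀ i, (Fin (d (i + 1)) → ℝ) → (Fin (d i) → ℝ))
    (Pdom : ∀ i, Set (Matrix (Fin (d i)) (Fin (d (i + 1))) ℝ))
    (fstar : ∀ i, Matrix (Fin (d i)) (Fin (d (i + 1))) ℝ → Fin (d i) → ℝ)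
    (hub : ∀ i < k, ∀ y, ∀ p ∈ Pdom i, p *ᵥ y - fstar i p ≤ f i y)
    (hatt : ∀ i < k, ∀ y, ∃ p ∈ Pdom i, f i y = p *ᵥ y - fstar i p)
    (x : Fin (d k) → ℝ) (π : ∀ i, Matrix (Fin (d i)) (Fin (d (i + 1))) ℝ)
    (hπ : ∀ i < k, π i ∈ Pdom i)
    (hmono : ∀ i < k, (¬ ∃ (A : Matrix (Fin (d i)) (Fin (d (i + 1))) ℝ) (c : Fin (d i) → ℝ),
      ∀ y, f i y = A *ᵥ y + c) → ∀ a b, 0 ≤ prodPi d π i a b) :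
    ∀ j ≤ k, prodPi d π (k - j) *ᵥ nestedL k d π fstar x j ≤
      prodPi d π (k - j) *ᵥ compF k d f x j := by
  intro j
  induction j with
  | zero => exact fun _ => le_rfl
  | succ j ih =>
    intro hj
    have hi : k - (j + 1) < k := by omega
    have hcast : k - (j + 1) + 1 = k - j := by omega
    set i := k - (j + 1)
    set P := prodPi d π i
    set s := fstar i (π i)
    set L := fun b => nestedL k d π fstar x j (Fin.cast (congrArg d hcast) b)
    set F := fun b => compF k d f x j (Fin.cast (congrArg d hcast) b)
    have hstep : prodPi d π (i + 1) *ᵥ L ≤ prodPi d π (i + 1) *ᵥ F := by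
      simpa only [prodPi_mulVec_cast π hcast] using ih (by omega)
    rw [nestedL_succ π fstar x hj, compF_succ f x hj]
    calc P *ᵥ (π i *ᵥ L - s) = prodPi d π (i + 1) *ᵥ L - P *ᵥ s := by
          rw [mulVec_sub, mulVec_mulVec]; rfl
      _ ≤ prodPi d π (i + 1) *ᵥ F - P *ᵥ s := sub_le_sub_right hstep _
      _ = P *ᵥ (π i *ᵥ F - s) := by rw [mulVec_sub, mulVec_mulVec]; rfl
      _ ≤ P *ᵥ f i F :=
          mulVec_sub_conj_le_mulVec (hub i hi) (hatt i hi) (hmono i hi) (hπ i hi) F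

end NestedLagrangian

theorem stmt_11_general (k : ℕ) (d : ℕ → ℕ)
    (f : ∀ i, (Fin (d (i + 1)) → ℝ) → (Fin (d i) → ℝ))
    (u : (Fin (d k) → ℝ) → ℝ)
    (Pdom : ∀ i, Set (Matrix (Fin (d i)) (Fin (d (i + 1))) ℝ))
    (fstar : ∀ i, Matrix (Fin (d i)) (Fin (d (i + 1))) ℝ → Fin (d i) → ℝ)
    -- biconjugation, upper-bound direction: f_i(y) ≥ π y − f_i*(π) for π ∈ Π_i
    (hub : ∀ i, i < k → ∀ (y : Fin (d (i + 1)) → ℝ), ∀ p ∈ Pdom i, ∀ a,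
      f i y a ≥ (∑ b, p a b * y b) - fstar i p a)
    -- biconjugation, attainment: the max is attained by some dual matrix in Π_i
    (hatt : ∀ i, i < k → ∀ (y : Fin (d (i + 1)) → ℝ), ∃ p ∈ Pdom i, ∀ a,
      f i y a = (∑ b, p a b * y b) - fstar i p a)
    (x : Fin (d k) → ℝ)
    (π : ∀ i, Matrix (Fin (d i)) (Fin (d (i + 1))) ℝ)
    (hπ : ∀ i, i < k → π i ∈ Pdom i)
    -- compositional monotonicity: for every non-linear layer i, π_{1:i-1} ≥ 0
    (hmono : ∀ i, i < k →
      (¬ ∃ (A : Matrix (Fin (d i)) (Fin (d (i + 1))) ℝ) (c : Fin (d i) → ℝ),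
        ∀ (y : Fin (d (i + 1)) → ℝ) a, f i y a = (∑ b, A a b * y b) + c a) →
      ∀ a b, 0 ≤ prodPi d π i a b) :
    ∀ a, compF k d f x k a + u x ≥ nestedL k d π fstar x k a + u x := by
  intro a
  have hk : k - k = 0 := Nat.sub_self k
  have hduality := prodPi_mulVec_nestedL_le f Pdom fstar hub
    (fun i hi y => (hatt i hi y).imp fun _ hp => ⟨hp.1, funext hp.2⟩) x π hπ
    (fun i hi hnl => hmono i hi fun ⟨A, c, hA⟩ => hnl ⟨A, c, fun y => funext (hA y)⟩)
    k le_rfl (Fin.cast (congrArg d hk) a)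
  rw [prodPi_mulVec_apply_of_eq_zero π hk, prodPi_mulVec_apply_of_eq_zero π hk] at hduality
  linarith

/-- Multi-layer weak duality: `f₁∘⋯∘f_k(x) + u(x) ≥ L(π_{1:k}; x)` for all feasible
`π_i ∈ Π_i`, provided for every non-linear layer `i` the product `π₁⋯π_{i−1}` is
componentwise nonnegative. -/
theorem stmt_11 (k : ℕ) (d : ℕ → ℕ) (hd0 : d 0 = 1)
    (f : ∀ i, (Fin (d (i + 1)) → ℝ) → (Fin (d i) → ℝ))
    (u : (Fin (d k) → ℝ) → ℝ)
    (Pdom : ∀ i, Set (Matrix (Fin (d i)) (Fin (d (i + 1))) ℝ))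
    (fstar : ∀ i, Matrix (Fin (d i)) (Fin (d (i + 1))) ℝ → Fin (d i) → ℝ)
    -- biconjugation, upper-bound direction: f_i(y) ≥ π y − f_i*(π) for π ∈ Π_i
    (hub : ∀ i, i < k → ∀ (y : Fin (d (i + 1)) → ℝ), ∀ p ∈ Pdom i, ∀ a,
      f i y a ≥ (∑ b, p a b * y b) - fstar i p a)
    -- biconjugation, attainment: the max is attained by some dual matrix in Π_i
    (hatt : ∀ i, i < k → ∀ (y : Fin (d (i + 1)) → ℝ), ∃ p ∈ Pdom i, ∀ a,
      f i y a = (∑ b, p a b * y b) - fstar i p a)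
    (x : Fin (d k) → ℝ)
    (π : ∀ i, Matrix (Fin (d i)) (Fin (d (i + 1))) ℝ)
    (hπ : ∀ i, i < k → π i ∈ Pdom i)
    -- compositional monotonicity: for every non-linear layer i, π_{1:i-1} ≥ 0
    (hmono : ∀ i, i < k →
      (¬ ∃ (A : Matrix (Fin (d i)) (Fin (d (i + 1))) ℝ) (c : Fin (d i) → ℝ),
        ∀ (y : Fin (d (i + 1)) → ℝ) a, f i y a = (∑ b, A a b * y b) + c a) →
      ∀ a b, 0 ≤ prodPi d π i a b) :
    ∀ a, compF k d f x k a + u x ≥ nestedL k d π fstar x k a + u x :=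
  stmt_11_general k d f u Pdom fstar hub hatt x π hπ hmono
end

section
/- Smoothness-gap bound via nested subgradients: if f₁,…,f_{i−1} are Lipschitz-smooth with constants L_{f₁},…,L_{f_{i−1}} and each f_j is M_{Π_j}-Lipschitz, then for any x̄, x*, with π̂_l ∈ ∂f_l(f_{l+1:}(x̄)) and π*_l ∈ ∂f_l(f_{l+1:}(x*)), Σ_{l=1}^{i−1} π*_{1:l−1} D_{f_l}(f_{l+1:}(x*), f_{l+1:}(x̄)) ≤ (1/2)(Σ_{l=1}^{i−1} M_{Π_{1:l−1}} L_{f_l} M_{Π_{l+1:}}²) ‖x̄ − x*‖², where π*_{1:l−1} ≥ 0 componentwise and M_{Π_{1:l−1}}, M_{Π_{l+1:}} bound ‖π*_{1:l−1}‖ and the Lipschitz constant of f_{l+1:} respectively. -/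
/-! Each Bregman term `D_{f_l}(f_{l+1:}(x*), f_{l+1:}(x̄))` is at most
`(L_{f_l}/2) ‖f_{l+1:}(x̄) − f_{l+1:}(x*)‖² ≤ (L_{f_l}/2) M_{Π_{l+1:}}² ‖x̄ − x*‖²`, by smoothness
at the subgradient `π*_l` and the Lipschitz bound on `f_{l+1:}`. Weighting by the nonnegative row
`π*_{1:l−1}`, whose sum is at most `M_{Π_{1:l−1}}`, and summing over `l` gives the claim; the
outer dimension `d 0` is `1`, so there is a single row. -/

open Finset

/-- `compAt k d f x i` is the inner composition `f_{i+1:k}(x)` as a vector indexed by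
`Fin (d (i+1))`. -/
noncomputable def compAt (k : ℕ) (d : ℕ → ℕ)
    (f : ∀ i, (Fin (d (i + 1)) → ℝ) → (Fin (d i) → ℝ))
    (x : Fin (d k) → ℝ) (i : ℕ) : Fin (d (i + 1)) → ℝ :=
  fun b =>
    if h : i + 1 ≤ k then
      compF k d f x (k - (i + 1)) (Fin.cast (congrArg d (by omega)) b)
    else 0

/-- The paper's `D_F(y, y')`, with the derivative of `F` at `y` replaced by the subgradient `G`. -/
def bregmanGap {ι κ : Type*} [Fintype κ] (F : (κ → ℝ) → ι → ℝ) (G : Matrix ι κ ℝ)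
    (y y' : κ → ℝ) (a : ι) : ℝ :=
  F y' a - F y a - ∑ b, G a b * (y' b - y b)

theorem sum_mul_le_mul_of_nonneg {ι : Type*} [Fintype ι] {w t : ι → ℝ} {M C : ℝ}
    (hw : ∀ i, 0 ≤ w i) (hwM : ∑ i, w i ≤ M) (ht : ∀ i, t i ≤ C) (hC : 0 ≤ C) :
    ∑ i, w i * t i ≤ M * C :=
  calc ∑ i, w i * t i ≤ ∑ i, w i * C :=
        sum_le_sum fun i _ => mul_le_mul_of_nonneg_left (ht i) (hw i)
    _ = (∑ i, w i) * C := (sum_mul _ _ _).symm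
    _ ≤ M * C := mul_le_mul_of_nonneg_right hwM hC

theorem stmt_13_general (k : ℕ) (d : ℕ → ℕ) (hd0 : d 0 = 1)
    (iLay : ℕ)
    (f : ∀ i, (Fin (d (i + 1)) → ℝ) → (Fin (d i) → ℝ))
    (π : ∀ i, Matrix (Fin (d i)) (Fin (d (i + 1))) ℝ)
    (Lf Mp Mq : ℕ → ℝ)
    (xbar xstar : Fin (d k) → ℝ)
    (hLf : ∀ l, 0 ≤ Lf l)
    -- L_{f_l}-smoothness: Bregman distances of f_l are bounded by (L_{f_l}/2)·dist²
    (hsm : ∀ l, l < iLay → ∀ (y y' : Fin (d (l + 1)) → ℝ)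
      (G : Matrix (Fin (d l)) (Fin (d (l + 1))) ℝ),
      (∀ a (y'' : Fin (d (l + 1)) → ℝ),
        f l y'' a ≥ f l y a + ∑ b, G a b * (y'' b - y b)) →
      ∀ a, f l y' a - f l y a - (∑ b, G a b * (y' b - y b)) ≤
        Lf l / 2 * ∑ b, (y' b - y b) ^ 2)
    -- π_l* ∈ ∂f_l(f_{l+1:}(x*)), componentwise
    (hsub : ∀ l, l < iLay → ∀ a (y'' : Fin (d (l + 1)) → ℝ),
      f l y'' a ≥ f l (compAt k d f xstar l) a +
        ∑ b, π l a b * (y'' b - compAt k d f xstar l b))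
    -- π*_{1:l−1} is componentwise nonnegative
    (hnn : ∀ l, l < iLay → ∀ a b, 0 ≤ prodPi d π l a b)
    -- M_{Π_{1:l−1}} bounds ‖π*_{1:l−1}‖
    (hMp : ∀ l, l < iLay → ∀ a, (∑ b, prodPi d π l a b) ≤ Mp l)
    -- M_{Π_{l+1:}} is a Lipschitz constant of the composition f_{l+1:}
    (hMq : ∀ l, l < iLay → ∀ x1 x2 : Fin (d k) → ℝ,
      (∑ b, (compAt k d f x1 l b - compAt k d f x2 l b) ^ 2) ≤
        (Mq l) ^ 2 * ∑ b', (x1 b' - x2 b') ^ 2) :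
    ∑ l ∈ Finset.range iLay,
      ∑ a, ∑ c, prodPi d π l a c *
        (f l (compAt k d f xbar l) c - f l (compAt k d f xstar l) c -
          ∑ b, π l c b * (compAt k d f xbar l b - compAt k d f xstar l b)) ≤
      (1 / 2) * (∑ l ∈ Finset.range iLay, Mp l * Lf l * (Mq l) ^ 2) *
        ∑ b', (xbar b' - xstar b') ^ 2 := by
  set S := ∑ b', (xbar b' - xstar b') ^ 2
  have layer : ∀ l ∈ range iLay, ∑ a, ∑ c, prodPi d π l a c *
      bregmanGap (f l) (π l) (compAt k d f xstar l) (compAt k d f xbar l) c ≤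
      1 / 2 * (Mp l * Lf l * Mq l ^ 2) * S := by
    intro l hl
    rw [mem_range] at hl
    have hL : 0 ≤ Lf l / 2 := by linarith [hLf l]
    have hgap : ∀ c, bregmanGap (f l) (π l) (compAt k d f xstar l) (compAt k d f xbar l) c ≤
        Lf l / 2 * (Mq l ^ 2 * S) := fun c =>
      (hsm l hl _ _ _ (hsub l hl) c).trans (mul_le_mul_of_nonneg_left (hMq l hl xbar xstar) hL)
    have hrow : ∀ a, ∑ c, prodPi d π l a c *
        bregmanGap (f l) (π l) (compAt k d f xstar l) (compAt k d f xbar l) c ≤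
        Mp l * (Lf l / 2 * (Mq l ^ 2 * S)) := fun a =>
      sum_mul_le_mul_of_nonneg (hnn l hl a) (hMp l hl a) hgap (by positivity)
    calc _ ≤ ∑ _a : Fin (d 0), Mp l * (Lf l / 2 * (Mq l ^ 2 * S)) := sum_le_sum fun a _ => hrow a
      _ = _ := by simp [hd0]; ring
  calc _ ≤ ∑ l ∈ range iLay, 1 / 2 * (Mp l * Lf l * Mq l ^ 2) * S := sum_le_sum layer
    _ = _ := by rw [← sum_mul, ← mul_sum]

/-- Smoothness-gap bound via nested subgradients:
`Σ_{l<i} π*_{1:l−1} D_{f_l}(f_{l+1:}(x*), f_{l+1:}(x̄))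
  ≤ (1/2)(Σ_{l<i} M_{Π_{1:l−1}} L_{f_l} M_{Π_{l+1:}}²) ‖x̄ − x*‖²`. -/
theorem stmt_13 (k : ℕ) (d : ℕ → ℕ) (hd0 : d 0 = 1)
    (iLay : ℕ) (hiLay : iLay ≤ k)
    (f : ∀ i, (Fin (d (i + 1)) → ℝ) → (Fin (d i) → ℝ))
    (π : ∀ i, Matrix (Fin (d i)) (Fin (d (i + 1))) ℝ)
    (Lf Mp Mq : ℕ → ℝ)
    (xbar xstar : Fin (d k) → ℝ)
    (hLf : ∀ l, 0 ≤ Lf l)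
    -- L_{f_l}-smoothness: Bregman distances of f_l are bounded by (L_{f_l}/2)·dist²
    (hsm : ∀ l, l < iLay → ∀ (y y' : Fin (d (l + 1)) → ℝ)
      (G : Matrix (Fin (d l)) (Fin (d (l + 1))) ℝ),
      (∀ a (y'' : Fin (d (l + 1)) → ℝ),
        f l y'' a ≥ f l y a + ∑ b, G a b * (y'' b - y b)) →
      ∀ a, f l y' a - f l y a - (∑ b, G a b * (y' b - y b)) ≤
        Lf l / 2 * ∑ b, (y' b - y b) ^ 2)
    -- π_l* ∈ ∂f_l(f_{l+1:}(x*)), componentwise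
    (hsub : ∀ l, l < iLay → ∀ a (y'' : Fin (d (l + 1)) → ℝ),
      f l y'' a ≥ f l (compAt k d f xstar l) a +
        ∑ b, π l a b * (y'' b - compAt k d f xstar l b))
    -- π*_{1:l−1} is componentwise nonnegative
    (hnn : ∀ l, l < iLay → ∀ a b, 0 ≤ prodPi d π l a b)
    -- M_{Π_{1:l−1}} bounds ‖π*_{1:l−1}‖
    (hMp : ∀ l, l < iLay → ∀ a, (∑ b, prodPi d π l a b) ≤ Mp l)
    -- M_{Π_{l+1:}} is a Lipschitz constant of the composition f_{l+1:}
    (hMq : ∀ l, l < iLay → ∀ x1 x2 : Fin (d k) → ℝ,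
      (∑ b, (compAt k d f x1 l b - compAt k d f x2 l b) ^ 2) ≤
        (Mq l) ^ 2 * ∑ b', (x1 b' - x2 b') ^ 2) :
    ∑ l ∈ Finset.range iLay,
      ∑ a, ∑ c, prodPi d π l a c *
        (f l (compAt k d f xbar l) c - f l (compAt k d f xstar l) c -
          ∑ b, π l c b * (compAt k d f xbar l b - compAt k d f xstar l b)) ≤
      (1 / 2) * (∑ l ∈ Finset.range iLay, Mp l * Lf l * (Mq l) ^ 2) *
        ∑ b', (xbar b' - xstar b') ^ 2 :=
  stmt_13_general k d hd0 iLay f π Lf Mp Mq xbar xstar hLf hsm hsub hnn hMp hMq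
end

section
/- Semi-smooth conjugate Bregman lower bound: let h : ℝⁿ → ℝ be convex with variables partitioned as y = (y_S, y_N), such that ∇_{y_S} h(y_S, y_N) exists and is L_{h_S}-Lipschitz in y_S for every fixed y_N. Then for any subgradients π̄ = (π̄_S, π̄_N) ∈ ∂h(ȳ) and π = (π_S, π_N) ∈ ∂h(y): D_{h*}(π̄, π) ≥ ‖π_S − π̄_S‖²/(2 L_{h_S}), where, by the Fenchel–Young correspondence, D_{h*}(π, π̄) = D_h(ȳ, y). -/
open InnerProductSpace

variable {E : Type*} [NormedAddCommGroup E] [InnerProductSpace ℝ E] [CompleteSpace E]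

/-- subgradient of a differentiable function equals the gradient -/
lemma subgrad_eq_grad {f : E → ℝ} {g p x : E}
    (hg : HasGradientAt f g x) (hsub : ∀ u, f x + (inner ℝ p (u - x) : ℝ) ≤ f u) :
    p = g := by
  have hψ : HasFDerivAt (fun u => f u - (toDual ℝ E p) u)
      (toDual ℝ E g - toDual ℝ E p) x :=
    (hasGradientAt_iff_hasFDerivAt.mp hg).sub (toDual ℝ E p).hasFDerivAt
  have hmin : IsLocalMin (fun u => f u - (toDual ℝ E p) u) x := by
    apply Filter.Eventually.of_forall
    intro u
    have := hsub u
    simp only [toDual_apply_apply, inner_sub_right] at this ⊢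
    linarith
  have h0 := hmin.hasFDerivAt_eq_zero hψ
  have : toDual ℝ E p = toDual ℝ E g := by
    rw [sub_eq_zero] at h0; exact h0.symm
  exact (toDual ℝ E).injective this

/-- descent lemma -/
lemma descent_lemma {f : E → ℝ} {g : E → E} {L : ℝ} (hL : 0 < L)
    (hg : ∀ u, HasGradientAt f (g u) u)
    (hLip : ∀ u w, ‖g u - g w‖ ≤ L * ‖u - w‖) (x y : E) :
    f y ≤ f x + (inner ℝ (g x) (y - x) : ℝ) + L / 2 * ‖y - x‖ ^ 2 := by
  set v := y - x with hv
  set φ : ℝ → ℝ := fun t =>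
    f (x + t • v) - t * (inner ℝ (g x) v : ℝ) - L / 2 * t ^ 2 * ‖v‖ ^ 2 with hφ
  have hline : ∀ t : ℝ, HasDerivAt (fun t : ℝ => x + t • v) v t := by
    intro t
    simpa using ((hasDerivAt_id t).smul_const v).const_add x
  have hder : ∀ t : ℝ, HasDerivAt φ
      ((inner ℝ (g (x + t • v)) v : ℝ) - (inner ℝ (g x) v : ℝ) - L * t * ‖v‖ ^ 2) t := by
    intro t
    have h1 : HasDerivAt (fun t : ℝ => f (x + t • v)) ((inner ℝ (g (x + t • v)) v : ℝ)) t := by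
      have := (hasGradientAt_iff_hasFDerivAt.mp (hg (x + t • v))).comp_hasDerivAt t (hline t)
      exact this
    have h2 : HasDerivAt (fun t : ℝ => t * (inner ℝ (g x) v : ℝ)) ((inner ℝ (g x) v : ℝ)) t := by
      simpa using (hasDerivAt_id t).mul_const ((inner ℝ (g x) v : ℝ))
    have h3 : HasDerivAt (fun t : ℝ => L / 2 * t ^ 2 * ‖v‖ ^ 2) (L * t * ‖v‖ ^ 2) t := by
      have : HasDerivAt (fun t : ℝ => t ^ 2) (2 * t) t := by
        simpa using hasDerivAt_pow 2 t
      have := (this.const_mul (L / 2)).mul_const (‖v‖ ^ 2)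
      exact this.congr_deriv (by ring)
    exact (h1.sub h2).sub h3
  have hmono : AntitoneOn φ (Set.Icc (0:ℝ) 1) := by
    apply antitoneOn_of_deriv_nonpos (convex_Icc 0 1)
    · exact Continuous.continuousOn
        (Differentiable.continuous (fun t => (hder t).differentiableAt))
    · intro t _
      exact (hder t).differentiableAt.differentiableWithinAt
    · intro t ht
      rw [interior_Icc] at ht
      rw [(hder t).deriv]
      have hcs : (inner ℝ (g (x + t • v)) v : ℝ) - (inner ℝ (g x) v : ℝ)
          ≤ L * t * ‖v‖ ^ 2 := by
        calc (inner ℝ (g (x + t • v)) v : ℝ) - (inner ℝ (g x) v : ℝ)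
            = (inner ℝ (g (x + t • v) - g x) v : ℝ) := by rw [inner_sub_left]
          _ ≤ ‖g (x + t • v) - g x‖ * ‖v‖ := real_inner_le_norm _ _
          _ ≤ (L * ‖x + t • v - x‖) * ‖v‖ := by
              apply mul_le_mul_of_nonneg_right (hLip _ _) (norm_nonneg _)
          _ = L * t * ‖v‖ ^ 2 := by
              have : ‖x + t • v - x‖ = t * ‖v‖ := by
                simp [norm_smul, abs_of_nonneg (le_of_lt ht.1)]
              rw [this]; ring
      linarith
  have := hmono (Set.left_mem_Icc.mpr zero_le_one) (Set.right_mem_Icc.mpr zero_le_one) zero_le_one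
  simp only [hφ] at this
  have hx1 : x + (1:ℝ) • v = y := by simp [hv]
  rw [hx1] at this
  simp only [one_mul, one_pow, zero_smul, add_zero, zero_mul, zero_pow, mul_zero,
    sub_zero, zero_pow] at this
  nlinarith [this]




/-- Semi-smooth conjugate Bregman lower bound: let `h` be convex with variables
partitioned as `y = (y_S, y_N)` such that `∇_{y_S} h` exists and is `L_{h_S}`-Lipschitz
in `y_S` for every fixed `y_N`. Then for subgradients `π̄ = (π̄_S, π̄_N) ∈ ∂h(ȳ)` and
`π = (π_S, π_N) ∈ ∂h(y)`:
`(1/(2 L_{h_S})) ‖π_S − π̄_S‖² ≤ h(y) − h(ȳ) − ⟨π̄, y − ȳ⟩` (i.e., `D_{h*}(π̄, π) ≥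
‖π_S − π̄_S‖²/(2 L_{h_S})`). -/
theorem stmt_14 {nS nN : ℕ}
    (h : EuclideanSpace ℝ (Fin nS) → EuclideanSpace ℝ (Fin nN) → ℝ)
    (hconv : ConvexOn ℝ Set.univ
      (fun p : EuclideanSpace ℝ (Fin nS) × EuclideanSpace ℝ (Fin nN) => h p.1 p.2))
    (gS : EuclideanSpace ℝ (Fin nS) → EuclideanSpace ℝ (Fin nN) →
      EuclideanSpace ℝ (Fin nS))
    -- partial gradient in the smooth block
    (hgrad : ∀ s t, HasGradientAt (fun s' => h s' t) (gS s t) s)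
    (L : ℝ) (hL : 0 < L)
    -- partial smoothness
    (hLip : ∀ s s' t, ‖gS s t - gS s' t‖ ≤ L * ‖s - s'‖)
    (ySb : EuclideanSpace ℝ (Fin nS)) (yNb : EuclideanSpace ℝ (Fin nN))
    (yS : EuclideanSpace ℝ (Fin nS)) (yN : EuclideanSpace ℝ (Fin nN))
    (πSb : EuclideanSpace ℝ (Fin nS)) (πNb : EuclideanSpace ℝ (Fin nN))
    (πS : EuclideanSpace ℝ (Fin nS)) (πN : EuclideanSpace ℝ (Fin nN))
    -- π̄ = (π̄_S, π̄_N) ∈ ∂h(ȳ)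
    (hsubb : ∀ s t, h s t ≥ h ySb yNb +
      (inner ℝ πSb (s - ySb) : ℝ) + (inner ℝ πNb (t - yNb) : ℝ))
    -- π = (π_S, π_N) ∈ ∂h(y)
    (hsub : ∀ s t, h s t ≥ h yS yN +
      (inner ℝ πS (s - yS) : ℝ) + (inner ℝ πN (t - yN) : ℝ)) :
    1 / (2 * L) * ‖πS - πSb‖ ^ 2 ≤
      h yS yN - h ySb yNb -
        ((inner ℝ πSb (yS - ySb) : ℝ) + (inner ℝ πNb (yN - yNb) : ℝ)) := by
  have hπS : πS = gS yS yN := by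
    apply subgrad_eq_grad (hgrad yS yN)
    intro u
    have := hsub u yN
    simpa using this
  set d := πS - πSb with hd
  set F : EuclideanSpace ℝ (Fin nS) → ℝ :=
    fun s => h s yN - (inner ℝ πSb s : ℝ) with hF
  have hG : ∀ s, HasGradientAt F (gS s yN - πSb) s := by
    intro s
    rw [hasGradientAt_iff_hasFDerivAt, map_sub]
    have h2 : HasFDerivAt (fun u : EuclideanSpace ℝ (Fin nS) => (inner ℝ πSb u : ℝ))
        (toDual ℝ (EuclideanSpace ℝ (Fin nS)) πSb) s := by
      exact (toDual ℝ (EuclideanSpace ℝ (Fin nS)) πSb).hasFDerivAt (x := s)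
    exact (hasGradientAt_iff_hasFDerivAt.mp (hgrad s yN)).sub h2
  have hGLip : ∀ u w, ‖(gS u yN - πSb) - (gS w yN - πSb)‖ ≤ L * ‖u - w‖ := by
    intro u w; rw [sub_sub_sub_cancel_right]; exact hLip u w yN
  have key := descent_lemma hL (fun s => hG s) hGLip yS (yS - (1 / L) • d)
  have hy : yS - (1 / L) • d - yS = -((1 / L) • d) := by abel
  rw [hy] at key
  have hgrad_eq : gS yS yN - πSb = d := by rw [hd, hπS]
  rw [hgrad_eq] at key
  have hinner : (inner ℝ d (-((1 / L) • d)) : ℝ) = -(1 / L * ‖d‖ ^ 2) := by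
    rw [inner_neg_right, real_inner_smul_right, real_inner_self_eq_norm_sq]
  have hnorm : ‖-((1 / L) • d)‖ ^ 2 = (1 / L) ^ 2 * ‖d‖ ^ 2 := by
    rw [norm_neg, norm_smul]
    rw [Real.norm_eq_abs, abs_of_pos (by positivity : (0:ℝ) < 1 / L)]
    ring
  rw [hinner, hnorm] at key
  have low := hsubb (yS - (1 / L) • d) yN
  have hLne : L ≠ 0 := ne_of_gt hL
  have id1 : L / 2 * ((1 / L) ^ 2 * ‖d‖ ^ 2) = 1 / (2 * L) * ‖d‖ ^ 2 := by
    field_simp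
  have id2 : (1 / L) * ‖d‖ ^ 2 - 1 / (2 * L) * ‖d‖ ^ 2 = 1 / (2 * L) * ‖d‖ ^ 2 := by
    field_simp; ring
  simp only [hF, inner_sub_right] at key low ⊢
  linarith [key, low, id1, id2]
end

section
/- Conjugate restriction identity for associated dual points: let g : ℝⁿ → ℝᵐ have convex L_g-smooth components, let w ∈ ℝ₊ᵐ with ‖w‖ = 1, and let g_w(y) := wᵀ g(y) with conjugate g_w*. Then for any π = g'(y*) (a Jacobian evaluated at some y*), g_w*(wᵀπ) = wᵀ g*(π), where g*(π) is the vector of componentwise conjugates g_j*(π_j) evaluated at the rows π_j of π. In general only g_w*(wᵀπ) ≤ wᵀ g*(π) holds for arbitrary π. -/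
/-!
Expanding the inner product, `⟪∑ⱼ wⱼ pⱼ, y⟫ - ∑ⱼ wⱼ gⱼ(y) = ∑ⱼ wⱼ (⟪pⱼ, y⟫ - gⱼ(y))`. Each bracket
is at most `gⱼ*(pⱼ)`, and the weights are nonnegative, which gives the inequality. For
`pⱼ = ∇gⱼ(y*)` every bracket attains its supremum at the same point `y*` (Fenchel–Young
equality), so the weighted sum attains `∑ⱼ wⱼ gⱼ*(pⱼ)` there.
-/

section WeightedConjugate

variable {ι E : Type*} [Fintype ι] [NormedAddCommGroup E] [InnerProductSpace ℝ E]

lemma inner_sum_smul_sub_sum_mul (w : ι → ℝ) (p : ι → E) (g : E → ι → ℝ) (y : E) :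
    (inner ℝ (∑ j, w j • p j) y : ℝ) - ∑ j, w j * g y j
      = ∑ j, w j * ((inner ℝ (p j) y : ℝ) - g y j) := by
  simp only [sum_inner, real_inner_smul_left, mul_sub, Finset.sum_sub_distrib]

lemma inner_sum_smul_sub_sum_mul_le {w : ι → ℝ} (hw : ∀ j, 0 ≤ w j) {g : E → ι → ℝ}
    {gstar : ι → E → ℝ} (hdom : ∀ j p y, (inner ℝ p y : ℝ) - g y j ≤ gstar j p)
    (p : ι → E) (y : E) :
    (inner ℝ (∑ j, w j • p j) y : ℝ) - ∑ j, w j * g y j ≤ ∑ j, w j * gstar j (p j) := by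
  rw [inner_sum_smul_sub_sum_mul]
  exact Finset.sum_le_sum fun j _ => mul_le_mul_of_nonneg_left (hdom j (p j) y) (hw j)

lemma isGreatest_range_inner_sum_smul_sub_sum_mul {w : ι → ℝ} (hw : ∀ j, 0 ≤ w j)
    {g : E → ι → ℝ} {gstar : ι → E → ℝ}
    (hdom : ∀ j p y, (inner ℝ p y : ℝ) - g y j ≤ gstar j p)
    {p : ι → E} {ystar : E} (hFY : ∀ j, gstar j (p j) = (inner ℝ (p j) ystar : ℝ) - g ystar j) :
    IsGreatest (Set.range fun y => (inner ℝ (∑ j, w j • p j) y : ℝ) - ∑ j, w j * g y j)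
      (∑ j, w j * gstar j (p j)) := by
  refine ⟨⟨ystar, ?_⟩, ?_⟩
  · simp only [inner_sum_smul_sub_sum_mul, hFY]
  · rintro _ ⟨y, rfl⟩
    exact inner_sum_smul_sub_sum_mul_le hw hdom p y

end WeightedConjugate

theorem stmt_16_general {n m : ℕ}
    (g : EuclideanSpace ℝ (Fin n) → Fin m → ℝ)
    (J : EuclideanSpace ℝ (Fin n) → Fin m → EuclideanSpace ℝ (Fin n))
    (w : Fin m → ℝ) (hw : ∀ j, 0 ≤ w j)
    -- componentwise conjugates: Fenchel–Young equality at gradient points …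
    (gstar : Fin m → EuclideanSpace ℝ (Fin n) → ℝ)
    (hFY : ∀ j y, gstar j (J y j) = (inner ℝ (J y j) y : ℝ) - g y j)
    -- … and domination elsewhere (gstar j is the conjugate of g · j)
    (hdom : ∀ j (p : EuclideanSpace ℝ (Fin n)) (y : EuclideanSpace ℝ (Fin n)),
      (inner ℝ p y : ℝ) - g y j ≤ gstar j p)
    (ystar : EuclideanSpace ℝ (Fin n)) :
    -- g_w*(wᵀπ) = wᵀ g*(π) for the associated π = g'(y*), with attainment
    IsGreatest
      (Set.range fun y =>
        (inner ℝ (∑ j, w j • J ystar j) y : ℝ) - ∑ j, w j * g y j)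
      (∑ j, w j * gstar j (J ystar j))
    ∧
    -- in general only g_w*(wᵀπ) ≤ wᵀ g*(π)
    (∀ (p : Fin m → EuclideanSpace ℝ (Fin n)) (y : EuclideanSpace ℝ (Fin n)),
      (inner ℝ (∑ j, w j • p j) y : ℝ) - ∑ j, w j * g y j ≤
        ∑ j, w j * gstar j (p j)) :=
  ⟨isGreatest_range_inner_sum_smul_sub_sum_mul hw hdom fun j => hFY j ystar,
    inner_sum_smul_sub_sum_mul_le hw hdom⟩

/-- Conjugate restriction identity for associated dual points: let `g : ℝⁿ → ℝᵐ` have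
convex `L_g`-smooth components, `w ∈ ℝ₊ᵐ` with `‖w‖ = 1`, and `g_w(y) = wᵀg(y)` with
conjugate `g_w*`. For `π = g'(y*)` (a Jacobian at a common primal point `y*`),
`g_w*(wᵀπ) = wᵀ g*(π)` and the supremum is attained, while for arbitrary `π` only
`g_w*(wᵀπ) ≤ wᵀ g*(π)` holds. -/
theorem stmt_16 {n m : ℕ}
    (g : EuclideanSpace ℝ (Fin n) → Fin m → ℝ)
    (J : EuclideanSpace ℝ (Fin n) → Fin m → EuclideanSpace ℝ (Fin n))
    (Lg : ℝ) (hLg : 0 < Lg)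
    (hconv : ∀ j, ConvexOn ℝ Set.univ (fun y => g y j))
    (hgrad : ∀ y j, HasGradientAt (fun x => g x j) (J y j) y)
    -- L_g-smoothness of each component
    (hsm : ∀ y ybar j, ‖J y j - J ybar j‖ ≤ Lg * ‖y - ybar‖)
    (w : Fin m → ℝ) (hw : ∀ j, 0 ≤ w j) (hwnorm : Real.sqrt (∑ j, (w j) ^ 2) = 1)
    -- componentwise conjugates: Fenchel–Young equality at gradient points …
    (gstar : Fin m → EuclideanSpace ℝ (Fin n) → ℝ)
    (hFY : ∀ j y, gstar j (J y j) = (inner ℝ (J y j) y : ℝ) - g y j)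
    -- … and domination elsewhere (gstar j is the conjugate of g · j)
    (hdom : ∀ j (p : EuclideanSpace ℝ (Fin n)) (y : EuclideanSpace ℝ (Fin n)),
      (inner ℝ p y : ℝ) - g y j ≤ gstar j p)
    (ystar : EuclideanSpace ℝ (Fin n)) :
    -- g_w*(wᵀπ) = wᵀ g*(π) for the associated π = g'(y*), with attainment
    IsGreatest
      (Set.range fun y =>
        (inner ℝ (∑ j, w j • J ystar j) y : ℝ) - ∑ j, w j * g y j)
      (∑ j, w j * gstar j (J ystar j))
    ∧
    -- in general only g_w*(wᵀπ) ≤ wᵀ g*(π)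
    (∀ (p : Fin m → EuclideanSpace ℝ (Fin n)) (y : EuclideanSpace ℝ (Fin n)),
      (inner ℝ (∑ j, w j • p j) y : ℝ) - ∑ j, w j * g y j ≤
        ∑ j, w j * gstar j (p j)) :=
  stmt_16_general g J w hw gstar hFY hdom ystar
end

section
/- Strong-convexity weighted descent recursion: let α > 0, ηᵗ = (t+1)α/3 and wᵗ = (t+1)/2. If for all t, A₀ᵗ ≤ (ηᵗ/2)‖xᵗ − x‖² − ((ηᵗ+α)/2)‖xᵗ⁺¹ − x‖² − (ηᵗ/2)‖xᵗ − xᵗ⁺¹‖², then Σ_{t=0}^{N−1} wᵗ A₀ᵗ ≤ (α/12)‖x⁰ − x‖² − (N(N+3)α/12)‖xᴺ − x‖² − Σ_{t=0}^{N−1} ((t+1)α/6) wᵗ ‖xᵗ⁺¹ − xᵗ‖². -/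
open Finset

theorem sum_range_succ_sub_le_of_le {a b d : ℕ → ℝ} (hd : ∀ t, 0 ≤ d t)
    (hab : ∀ t, a (t + 1) ≤ b t) (N : ℕ) :
    ∑ t ∈ range (N + 1), (a t * d t - b t * d (t + 1)) ≤ a 0 * d 0 - b N * d (N + 1) := by
  induction N with
  | zero => simp
  | succ N ih =>
    rw [sum_range_succ]
    linarith [mul_le_mul_of_nonneg_right (hab N) (hd (N + 1))]

/-- Strong-convexity weighted descent recursion: with `α > 0`, `ηᵗ = (t+1)α/3`,
`wᵗ = (t+1)/2`, if for all `t < N`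
`A₀ᵗ ≤ (ηᵗ/2)‖xᵗ − x‖² − ((ηᵗ+α)/2)‖xᵗ⁺¹ − x‖² − (ηᵗ/2)‖xᵗ − xᵗ⁺¹‖²`, then
`Σ_{t<N} wᵗ A₀ᵗ ≤ (α/12)‖x⁰ − x‖² − (N(N+3)α/12)‖xᴺ − x‖²
  − Σ_{t<N} ((t+1)α/6) wᵗ ‖xᵗ⁺¹ − xᵗ‖²`. -/
theorem stmt_19 {E : Type*} [NormedAddCommGroup E]
    (α : ℝ) (hα : 0 < α) (N : ℕ)
    (x : ℕ → E) (y : E)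
    (η w : ℕ → ℝ)
    (hη : ∀ t, η t = ((t : ℝ) + 1) * α / 3)
    (hw : ∀ t, w t = ((t : ℝ) + 1) / 2)
    (A : ℕ → ℝ)
    (hA : ∀ t < N, A t ≤
      η t / 2 * ‖x t - y‖ ^ 2 - (η t + α) / 2 * ‖x (t + 1) - y‖ ^ 2 -
        η t / 2 * ‖x t - x (t + 1)‖ ^ 2) :
    ∑ t ∈ Finset.range N, w t * A t ≤
      α / 12 * ‖x 0 - y‖ ^ 2 - (N * (N + 3) * α / 12) * ‖x N - y‖ ^ 2 -
        ∑ t ∈ Finset.range N, (((t : ℝ) + 1) * α / 6) * w t * ‖x (t + 1) - x t‖ ^ 2 := by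
  cases N with
  | zero =>
    simp only [range_zero, sum_empty, CharP.cast_eq_zero]
    nlinarith [sq_nonneg ‖x 0 - y‖]
  | succ n =>
    set d : ℕ → ℝ := fun t => ‖x t - y‖ ^ 2
    set c : ℕ → ℝ := fun t => ((t : ℝ) + 1) * α / 6 * w t * ‖x (t + 1) - x t‖ ^ 2
    have hstep : ∀ t ∈ range (n + 1), w t * A t ≤
        (w t * η t / 2 * d t - w t * (η t + α) / 2 * d (t + 1)) - c t := by
      intro t ht
      have hwA := mul_le_mul_of_nonneg_left (hA t (mem_range.1 ht))
        (show 0 ≤ w t by rw [hw]; positivity)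
      simp only [d, c, norm_sub_rev (x (t + 1)), hη] at hwA ⊢
      linarith
    -- `w (t + 1) η (t + 1) = (t + 2)² α / 6 ≤ (t + 1)(t + 4) α / 6 = w t (η t + α)`
    have hweights : ∀ t, w (t + 1) * η (t + 1) / 2 ≤ w t * (η t + α) / 2 := by
      intro t
      simp only [hw, hη]
      push_cast
      nlinarith [mul_nonneg (Nat.cast_nonneg t : (0 : ℝ) ≤ t) hα.le]
    calc ∑ t ∈ range (n + 1), w t * A t
        ≤ ∑ t ∈ range (n + 1), ((w t * η t / 2 * d t - w t * (η t + α) / 2 * d (t + 1)) - c t) :=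
          sum_le_sum hstep
      _ = ∑ t ∈ range (n + 1), (w t * η t / 2 * d t - w t * (η t + α) / 2 * d (t + 1)) -
            ∑ t ∈ range (n + 1), c t := sum_sub_distrib _ _
      _ ≤ w 0 * η 0 / 2 * d 0 - w n * (η n + α) / 2 * d (n + 1) - ∑ t ∈ range (n + 1), c t := by
          gcongr
          exact sum_range_succ_sub_le_of_le (fun t => by positivity) hweights n
      _ = _ := by simp only [d, hw, hη]; push_cast; ring
end
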